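/- arXiv:1704.07115 — 11 statements merged into one kernel-verified Lean document; each statement's English description precedes it below -/
import Mathlib

section
/- Let (b_n) and (c_n) be real sequences such that the Cesàro mean of (b_n) exists and equals b. Then the two sequences can be merged into a sequence (d_n) whose Cesàro mean exists and equals b. Here (d_n) is a merge of (b_n) and (c_n) if there exist strictly increasing functions σ, τ : ℕ → ℕ whose ranges are disjoint and together cover ℕ, such that d_{σ(n)} = b_n and d_{τ(n)} = c_n for all n. -/
open Filter Topology

noncomputable section
namespace CesaroMerge

variable (cs : ℕ → ℝ)

def Kk (n : ℕ) : ℕ := ⌈∑ k ∈ Finset.range (n + 1), |cs k|⌉₊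
def Pp (n : ℕ) : ℕ := (n + 1) * (Kk cs n + n + 1)
def Tt (n : ℕ) : ℕ := ∑ k ∈ Finset.range (n + 1), (Pp cs k + 1)

lemma Pp_pos (n : ℕ) : 0 < Pp cs n := Nat.mul_pos (by omega) (by omega)

lemma Tt_succ (n : ℕ) : Tt cs (n + 1) = Tt cs n + (Pp cs (n + 1) + 1) := by
  simp [Tt, Finset.sum_range_succ]

lemma Tt_strictMono : StrictMono (Tt cs) :=
  strictMono_nat_of_lt_succ fun n => by rw [Tt_succ]; omega

lemma Pp_lt_Tt (n : ℕ) : Pp cs n < Tt cs n := by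
  have : Pp cs n + 1 ≤ Tt cs n :=
    Finset.single_le_sum (f := fun k => Pp cs k + 1) (fun i _ => Nat.zero_le _)
      (Finset.self_mem_range_succ n)
  omega

lemma lt_Tt (n : ℕ) : n < Tt cs n := by
  have h := Pp_lt_Tt cs n
  have : n + 1 ≤ Pp cs n := by
    have h1 : 1 ≤ Kk cs n + n + 1 := by omega
    calc n + 1 = (n + 1) * 1 := by ring
    _ ≤ Pp cs n := Nat.mul_le_mul_left _ h1
  omega

def pC (i : ℕ) : Prop := ∃ n, Tt cs n = i

instance : DecidablePred (pC cs) := fun i =>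
  decidable_of_iff (∃ n < i, Tt cs n = i) (by
    constructor
    · rintro ⟨n, _, h⟩; exact ⟨n, h⟩
    · rintro ⟨n, h⟩; exact ⟨n, h ▸ lt_Tt cs n, h⟩)

lemma count_Tt (n : ℕ) : Nat.count (pC cs) (Tt cs n) = n := by
  rw [Nat.count_eq_card_filter_range]
  have : Finset.filter (pC cs) (Finset.range (Tt cs n)) = (Finset.range n).image (Tt cs) := by
    ext i
    simp only [Finset.mem_filter, Finset.mem_range, Finset.mem_image]
    constructor
    · rintro ⟨hi, k, rfl⟩
      exact ⟨k, (Tt_strictMono cs).lt_iff_lt.mp hi, rfl⟩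
    · rintro ⟨k, hk, rfl⟩
      exact ⟨(Tt_strictMono cs).lt_iff_lt.mpr hk, k, rfl⟩
  rw [this, Finset.card_image_of_injective _ (Tt_strictMono cs).injective, Finset.card_range]

lemma Tt_lt_iff (m N : ℕ) : Tt cs m < N ↔ m < Nat.count (pC cs) N := by
  constructor
  · intro h
    have h1 : Nat.count (pC cs) (Tt cs m + 1) ≤ Nat.count (pC cs) N := Nat.count_monotone _ h
    rw [Nat.count_succ, count_Tt, if_pos ⟨m, rfl⟩] at h1
    omega
  · intro h
    by_contra hc
    push_neg at hc
    have h2 := Nat.count_monotone (pC cs) hc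
    rw [count_Tt] at h2
    omega

def dd (bs : ℕ → ℝ) (N : ℕ) : ℝ :=
  if h : pC cs N then cs (Nat.find h) else bs (N - Nat.count (pC cs) N)

lemma dd_Tt (bs : ℕ → ℝ) (n : ℕ) : dd cs bs (Tt cs n) = cs n := by
  have h : pC cs (Tt cs n) := ⟨n, rfl⟩
  rw [dd, dif_pos h]
  congr 1
  exact (Tt_strictMono cs).injective (Nat.find_spec h)

lemma count_not (N : ℕ) :
    Nat.count (pC cs) N + Nat.count (fun i => ¬ pC cs i) N = N := by
  rw [Nat.count_eq_card_filter_range, Nat.count_eq_card_filter_range,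
    Finset.card_filter_add_card_filter_not, Finset.card_range]

lemma sum_dd (bs : ℕ → ℝ) (N : ℕ) :
    ∑ i ∈ Finset.range N, dd cs bs i =
      (∑ i ∈ Finset.range (N - Nat.count (pC cs) N), bs i) +
      (∑ k ∈ Finset.range (Nat.count (pC cs) N), cs k) := by
  induction N with
  | zero => simp
  | succ N ih =>
    have hle : Nat.count (pC cs) N ≤ N := Nat.count_le _
    rw [Finset.sum_range_succ, ih, Nat.count_succ]
    by_cases h : pC cs N
    · rw [if_pos h]
      have hNc : N = Tt cs (Nat.find h) := (Nat.find_spec h).symm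
      have hcount : Nat.count (pC cs) N = Nat.find h := by conv_lhs => rw [hNc, count_Tt]
      rw [dd, dif_pos h]
      have he : N + 1 - (Nat.count (pC cs) N + 1) = N - Nat.count (pC cs) N := by omega
      rw [he, Finset.sum_range_succ, hcount]
      ring
    · rw [if_neg h, dd, dif_neg h]
      have he : N + 1 - (Nat.count (pC cs) N + 0) = (N - Nat.count (pC cs) N) + 1 := by omega
      rw [he, Finset.sum_range_succ, add_zero]
      ring

lemma count_tendsto : Tendsto (fun N => Nat.count (pC cs) N) atTop atTop := by
  apply tendsto_atTop_atTop.2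
  intro M
  exact ⟨Tt cs M + 1, fun N hN => le_of_lt ((Tt_lt_iff cs M N).1 (by omega))⟩

lemma sq_count_le (N : ℕ) (h : 1 ≤ Nat.count (pC cs) N) :
    Nat.count (pC cs) N * Nat.count (pC cs) N ≤ N := by
  set m := Nat.count (pC cs) N with hm
  have h1 : Tt cs (m - 1) < N := (Tt_lt_iff cs _ N).2 (by omega)
  have h2 : Pp cs (m - 1) < Tt cs (m - 1) := Pp_lt_Tt cs _
  have h3 : m * m ≤ Pp cs (m - 1) := by
    have he : Pp cs (m - 1) = (m - 1 + 1) * (Kk cs (m - 1) + (m - 1) + 1) := rfl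
    have hm1 : m - 1 + 1 = m := by omega
    rw [he, hm1]
    exact Nat.mul_le_mul_left _ (by omega)
  omega

lemma Pp_eq (m : ℕ) (h : 1 ≤ m) : Pp cs (m - 1) = m * (Kk cs (m - 1) + m) := by
  have hm1 : m - 1 + 1 = m := by omega
  show (m - 1 + 1) * (Kk cs (m - 1) + (m - 1) + 1) = _
  rw [add_assoc (Kk cs (m - 1)) (m - 1) 1, hm1]

lemma C_bound (N : ℕ) (h : 1 ≤ Nat.count (pC cs) N) :
    |∑ k ∈ Finset.range (Nat.count (pC cs) N), cs k| * (Nat.count (pC cs) N : ℝ) ≤ N := by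
  obtain ⟨m, hm⟩ : ∃ m, Nat.count (pC cs) N = m := ⟨_, rfl⟩
  rw [hm] at h ⊢
  have h1 : Tt cs (m - 1) < N := (Tt_lt_iff cs _ N).2 (by omega)
  have h2 : Pp cs (m - 1) < N := lt_trans (Pp_lt_Tt cs _) h1
  rw [Pp_eq cs m h] at h2
  have habs : |∑ k ∈ Finset.range m, cs k| ≤ (Kk cs (m - 1) : ℝ) := by
    calc |∑ k ∈ Finset.range m, cs k| ≤ ∑ k ∈ Finset.range m, |cs k| :=
          Finset.abs_sum_le_sum_abs _ _
    _ = ∑ k ∈ Finset.range ((m - 1) + 1), |cs k| := by rw [Nat.sub_add_cancel h]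
    _ ≤ (Kk cs (m - 1) : ℝ) := Nat.le_ceil _
  have hmn : (m * (Kk cs (m - 1) + m) : ℝ) ≤ N := by exact_mod_cast h2.le
  calc |∑ k ∈ Finset.range m, cs k| * (m : ℝ) ≤ (Kk cs (m - 1) : ℝ) * m :=
        mul_le_mul_of_nonneg_right habs (by positivity)
  _ ≤ (m * (Kk cs (m - 1) + m) : ℝ) := by nlinarith [Nat.cast_nonneg (α := ℝ) m, Nat.cast_nonneg (α := ℝ) (Kk cs (m - 1))]
  _ ≤ N := hmn

lemma main_tendsto (bs : ℕ → ℝ) (b : ℝ)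
    (hb : Tendsto (fun n => (∑ i ∈ Finset.range n, bs i) / (n : ℝ)) atTop (𝓝 b)) :
    Tendsto (fun n => (∑ i ∈ Finset.range n, dd cs bs i) / (n : ℝ)) atTop (𝓝 b) := by
  set m := fun N => Nat.count (pC cs) N with hmdef
  have hmt : Tendsto m atTop atTop := count_tendsto cs
  have hev1 : ∀ᶠ N in atTop, 1 ≤ m N := hmt.eventually_ge_atTop 1
  have hinv : Tendsto (fun N => 1 / (m N : ℝ)) atTop (𝓝 0) :=
    tendsto_one_div_atTop_nhds_zero_nat.comp hmt
  -- m N / N → 0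
  have hmN : Tendsto (fun N => (m N : ℝ) / N) atTop (𝓝 0) := by
    apply squeeze_zero' (g := fun N => 1 / (m N : ℝ))
    · filter_upwards with N; positivity
    · filter_upwards [hev1] with N h
      have hsq := sq_count_le cs N h
      have hm0 : (0 : ℝ) < m N := by exact_mod_cast h
      have hN1 : 1 ≤ N := le_trans (by nlinarith) hsq
      have hN0 : (0 : ℝ) < N := by exact_mod_cast hN1
      rw [div_le_div_iff₀ hN0 hm0]
      have : ((m N : ℝ)) * (m N : ℝ) ≤ N := by exact_mod_cast hsq
      nlinarith
    · exact hinv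
  -- C part → 0
  have hCN : Tendsto (fun N => (∑ k ∈ Finset.range (m N), cs k) / (N : ℝ)) atTop (𝓝 0) := by
    apply squeeze_zero_norm' (a := fun N => 1 / (m N : ℝ))
    · filter_upwards [hev1] with N h
      have hC := C_bound cs N h
      have hm0 : (0 : ℝ) < m N := by exact_mod_cast h
      have hsq := sq_count_le cs N h
      have hN1 : 1 ≤ N := le_trans (by nlinarith) hsq
      have hN0 : (0 : ℝ) < N := by exact_mod_cast hN1
      rw [Real.norm_eq_abs, abs_div, abs_of_pos hN0, div_le_div_iff₀ hN0 hm0]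
      nlinarith
    · exact hinv
  -- N - m N → ∞
  have hjt : Tendsto (fun N => N - m N) atTop atTop := by
    apply tendsto_atTop_atTop.2
    intro M
    refine ⟨(M + 1) * (M + 1), fun N hN => ?_⟩
    have hs : M + 1 ≤ Nat.sqrt N := Nat.le_sqrt.2 hN
    have hss : Nat.sqrt N * Nat.sqrt N ≤ N := by simpa [pow_two] using Nat.sqrt_le' N
    have hmle : m N ≤ Nat.sqrt N := by
      rcases Nat.eq_zero_or_pos (m N) with h | h
      · omega
      · exact Nat.le_sqrt.2 (sq_count_le cs N h)
    have : M + Nat.sqrt N ≤ Nat.sqrt N * Nat.sqrt N := by nlinarith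
    omega
  have hB1 : Tendsto (fun N => (∑ i ∈ Finset.range (N - m N), bs i) / ((N - m N : ℕ) : ℝ))
      atTop (𝓝 b) := hb.comp hjt
  have hj1 : Tendsto (fun N => ((N - m N : ℕ) : ℝ) / N) atTop (𝓝 1) := by
    have h0 : Tendsto (fun N => 1 - (m N : ℝ) / N) atTop (𝓝 1) := by
      simpa using tendsto_const_nhds.sub hmN
    apply h0.congr'
    filter_upwards [eventually_ge_atTop 1] with N hN
    have hle : m N ≤ N := Nat.count_le _
    have hN0 : (0 : ℝ) < N := by exact_mod_cast hN
    rw [Nat.cast_sub hle]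
    field_simp
  have hB : Tendsto (fun N => (∑ i ∈ Finset.range (N - m N), bs i) / (N : ℝ)) atTop (𝓝 b) := by
    have h2 := hB1.mul hj1
    rw [mul_one] at h2
    apply h2.congr
    intro N
    rcases eq_or_ne ((N - m N : ℕ) : ℝ) 0 with h | h
    · simp only [h]
      have h3 : N - m N = 0 := by exact_mod_cast h
      simp [h3]
    · field_simp
  have hfin := hB.add hCN
  rw [add_zero] at hfin
  apply hfin.congr
  intro N
  rw [sum_dd, add_div]

end CesaroMerge
end

open CesaroMerge in
/-- any sequence can be merged into a sequence with Cesàro mean `b`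
without changing that Cesàro mean. -/
theorem merge_preserves_cesaro (bs cs : ℕ → ℝ) (b : ℝ)
    (hb : Tendsto (fun n => (∑ i ∈ Finset.range n, bs i) / (n : ℝ)) atTop (𝓝 b)) :
    ∃ (d : ℕ → ℝ) (σ τ : ℕ → ℕ), StrictMono σ ∧ StrictMono τ ∧
      Disjoint (Set.range σ) (Set.range τ) ∧
      Set.range σ ∪ Set.range τ = Set.univ ∧
      (∀ n, d (σ n) = bs n) ∧ (∀ n, d (τ n) = cs n) ∧
      Tendsto (fun n => (∑ i ∈ Finset.range n, d i) / (n : ℝ)) atTop (𝓝 b) := by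
  have hinf : {i | ¬ pC cs i}.Infinite := by
    apply Set.infinite_of_not_bddAbove
    rintro ⟨M, hM⟩
    have hmem : (Tt cs M + 1) ∈ {i | ¬ pC cs i} := by
      rintro ⟨k, hk⟩
      have hkM : M < k := (Tt_strictMono cs).lt_iff_lt.mp (by omega)
      have h1 : Tt cs (M + 1) ≤ Tt cs k := (Tt_strictMono cs).monotone hkM
      rw [Tt_succ] at h1
      have := Pp_pos cs (M + 1)
      omega
    have h2 := hM hmem
    have h3 := lt_Tt cs M
    omega
  set σ := Nat.nth (fun i => ¬ pC cs i) with hσ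
  have hrσ : Set.range σ = {i | ¬ pC cs i} := Nat.range_nth_of_infinite hinf
  have hrτ : Set.range (Tt cs) = {i | pC cs i} := rfl
  refine ⟨dd cs bs, σ, Tt cs, Nat.nth_strictMono hinf, Tt_strictMono cs, ?_, ?_, ?_,
    dd_Tt cs bs, main_tendsto cs bs b hb⟩
  · rw [hrσ, hrτ]
    have : {i | ¬ pC cs i} = {i | pC cs i}ᶜ := rfl
    rw [this]
    exact disjoint_compl_left
  · rw [hrσ, hrτ]
    have : {i | ¬ pC cs i} = {i | pC cs i}ᶜ := rfl
    rw [this]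
    exact Set.compl_union_self _
  · intro n
    have hn : ¬ pC cs (σ n) := Nat.nth_mem_of_infinite hinf n
    rw [dd, dif_neg hn]
    congr 1
    have h1 : Nat.count (fun i => ¬ pC cs i) (σ n) = n := Nat.count_nth_of_infinite hinf n
    have h2 := count_not cs (σ n)
    omega
end

section
/- Let (a_n) and (b_n) be real sequences with a_n → a and b_n → b, where a < b, and let α, β ≥ 0 satisfy α + β = 1. Then the two sequences can be merged into a sequence (d_n) whose Cesàro mean exists and equals αa + βb. Here (d_n) is a merge of (a_n) and (b_n) if there exist strictly increasing functions σ, τ : ℕ → ℕ whose ranges are disjoint and together cover ℕ, such that d_{σ(n)} = a_n and d_{τ(n)} = b_n for all n. -/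
open Filter Topology

lemma infinite_steps (c : ℕ → ℕ) (hstep : ∀ n, c (n+1) = c n ∨ c (n+1) = c n + 1)
    (hc : Tendsto c atTop atTop) : {n | c (n+1) = c n + 1}.Infinite := by
  by_contra h
  rw [Set.not_infinite] at h
  obtain ⟨N, hN⟩ := h.bddAbove
  have hconst : ∀ k, c (N + 1 + k) = c (N + 1) := by
    intro k
    induction k with
    | zero => rfl
    | succ k ih =>
      have hns : N + 1 + k ∉ {n | c (n+1) = c n + 1} := by
        intro hmem; have := hN hmem; omega
      rcases hstep (N + 1 + k) with h1 | h1
      · rw [show N+1+(k+1) = N+1+k+1 by ring, h1, ih]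
      · exact absurd h1 hns
  obtain ⟨m, hm1, hm2⟩ :=
    ((hc.eventually_gt_atTop (c (N + 1))).and (eventually_ge_atTop (N + 1))).exists
  have := hconst (m - (N + 1))
  rw [show N + 1 + (m - (N+1)) = m by omega] at this
  omega

lemma key_merge (as bs : ℕ → ℝ) (a b : ℝ)
    (ha : Tendsto as atTop (𝓝 a)) (hb : Tendsto bs atTop (𝓝 b))
    (α : ℝ) (c : ℕ → ℕ) (hc0 : c 0 = 0)
    (hstep : ∀ n, c (n+1) = c n ∨ c (n+1) = c n + 1)
    (hc1 : Tendsto c atTop atTop)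
    (hc2 : Tendsto (fun n => n - c n) atTop atTop)
    (hlim : Tendsto (fun n => (c n : ℝ) / n) atTop (𝓝 α)) :
    ∃ (d : ℕ → ℝ) (σ τ : ℕ → ℕ), StrictMono σ ∧ StrictMono τ ∧
      Disjoint (Set.range σ) (Set.range τ) ∧
      Set.range σ ∪ Set.range τ = Set.univ ∧
      (∀ n, d (σ n) = as n) ∧ (∀ n, d (τ n) = bs n) ∧
      Tendsto (fun n => (∑ i ∈ Finset.range n, d i) / (n : ℝ)) atTop
        (𝓝 (α * a + (1 - α) * b)) := by
  have c_le : ∀ n, c n ≤ n := by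
    intro n; induction n with
    | zero => omega
    | succ n ih => rcases hstep n with h | h <;> omega
  set p : ℕ → Prop := fun n => c (n+1) = c n + 1 with hp_def
  haveI : DecidablePred p := fun n => Nat.decEq _ _
  set q : ℕ → Prop := fun n => ¬ p n with hq_def
  haveI : DecidablePred q := fun n => instDecidableNot
  have hp_inf : {n | p n}.Infinite := infinite_steps c hstep hc1
  have hq_inf : {n | q n}.Infinite := by
    have hsub : {n | (fun n => n - c n) (n+1) = (fun n => n - c n) n + 1} ⊆ {n | q n} := by
      intro n hn
      simp only [Set.mem_setOf_eq] at hn ⊢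
      have h1 := c_le n; have h2 := c_le (n+1)
      intro hp'
      have : c (n+1) = c n + 1 := hp'
      omega
    refine Set.Infinite.mono hsub ?_
    refine infinite_steps _ (fun n => ?_) hc2
    have h1 := c_le n; have h2 := c_le (n+1)
    rcases hstep n with h | h
    · right; show n + 1 - c (n+1) = n - c n + 1; omega
    · left; show n + 1 - c (n+1) = n - c n; omega
  have count_p : ∀ n, Nat.count p n = c n := by
    intro n; induction n with
    | zero => simp [hc0]
    | succ n ih =>
      rw [Nat.count_succ, ih]
      by_cases h : p n
      · have h' : c (n+1) = c n + 1 := h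
        rw [if_pos h]; omega
      · rcases hstep n with h' | h'
        · simp [h, h']
        · exact absurd h' h
  have count_q : ∀ n, Nat.count q n = n - c n := by
    intro n; induction n with
    | zero => simp
    | succ n ih =>
      rw [Nat.count_succ, ih]
      by_cases h : q n
      · have h' : c (n+1) = c n := by
          rcases hstep n with h' | h'; exact h'; exact absurd h' h
        have := c_le n
        rw [if_pos h]; omega
      · have hp' : c (n+1) = c n + 1 := not_not.1 h
        have := c_le n
        rw [if_neg h]; omega
  set d : ℕ → ℝ := fun n => if p n then as (c n) else bs (n - c n) with hd_def
  refine ⟨d, Nat.nth p, Nat.nth q, Nat.nth_strictMono hp_inf, Nat.nth_strictMono hq_inf,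
    ?_, ?_, ?_, ?_, ?_⟩
  · rw [Nat.range_nth_of_infinite hp_inf, Nat.range_nth_of_infinite hq_inf]
    rw [Set.disjoint_left]
    intro x hx hx'
    exact hx' hx
  · rw [Nat.range_nth_of_infinite hp_inf, Nat.range_nth_of_infinite hq_inf]
    ext x
    simp only [Set.mem_union, Set.mem_univ, iff_true]
    exact (em (p x)).imp (fun h => h) (fun h => h)
  · intro n
    have hm : p (Nat.nth p n) := Nat.nth_mem_of_infinite hp_inf n
    show (if p (Nat.nth p n) then as (c (Nat.nth p n)) else _) = as n
    rw [if_pos hm, ← count_p, Nat.count_nth_of_infinite hp_inf]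
  · intro n
    have hm : q (Nat.nth q n) := Nat.nth_mem_of_infinite hq_inf n
    show (if p (Nat.nth q n) then _ else bs (Nat.nth q n - c (Nat.nth q n))) = bs n
    rw [if_neg hm, ← count_q, Nat.count_nth_of_infinite hq_inf]
  · -- the Cesàro limit
    have hsum : ∀ N, ∑ i ∈ Finset.range N, d i =
        (∑ k ∈ Finset.range (c N), as k) + ∑ k ∈ Finset.range (N - c N), bs k := by
      intro N; induction N with
      | zero => simp [hc0]
      | succ N ih =>
        rw [Finset.sum_range_succ, ih]
        by_cases h : p N
        · have hc' : c (N+1) = c N + 1 := h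
          rw [hc', show N + 1 - (c N + 1) = N - c N by omega, Finset.sum_range_succ]
          have hdN : d N = as (c N) := if_pos h
          rw [hdN]; ring
        · have hc' : c (N+1) = c N := by
            rcases hstep N with h' | h'; exact h'; exact absurd h' h
          have := c_le N
          rw [hc', show N + 1 - c N = (N - c N) + 1 by omega, Finset.sum_range_succ]
          have hdN : d N = bs (N - c N) := if_neg h
          rw [hdN]; ring
    have Ta : Tendsto (fun N => ((c N : ℝ)/N) * (((c N : ℝ))⁻¹ * ∑ i ∈ Finset.range (c N), as i))
        atTop (𝓝 (α * a)) := hlim.mul (ha.cesaro.comp hc1)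
    have Tb : Tendsto (fun N => (((N - c N : ℕ) : ℝ)/N) *
        ((((N - c N : ℕ) : ℝ))⁻¹ * ∑ i ∈ Finset.range (N - c N), bs i))
        atTop (𝓝 ((1 - α) * b)) := by
      have h1 : Tendsto (fun N => (((N - c N : ℕ) : ℝ)/N)) atTop (𝓝 (1 - α)) := by
        have h2 : Tendsto (fun N : ℕ => 1 - (c N : ℝ)/N) atTop (𝓝 (1 - α)) :=
          tendsto_const_nhds.sub hlim
        refine h2.congr' ?_
        filter_upwards [eventually_ge_atTop 1] with N hN
        have hN' : (N : ℝ) ≠ 0 := by positivity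
        rw [Nat.cast_sub (c_le N)]
        field_simp
      exact h1.mul (hb.cesaro.comp hc2)
    refine (Ta.add Tb).congr' ?_
    filter_upwards [hc1.eventually_ge_atTop 1, hc2.eventually_ge_atTop 1,
      eventually_ge_atTop 1] with N h1 h2 h3
    have hcN : (c N : ℝ) ≠ 0 := by
      have : (1:ℕ) ≤ c N := h1
      positivity
    have hcN2 : ((N - c N : ℕ) : ℝ) ≠ 0 := by
      have : (1:ℕ) ≤ N - c N := h2
      positivity
    have hN : (N : ℝ) ≠ 0 := by positivity
    rw [hsum N]
    field_simp

lemma sqrt_tendsto_atTop : Tendsto Nat.sqrt atTop atTop := by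
  rw [tendsto_atTop_atTop]; intro K; exact ⟨K * K, fun n hn => Nat.le_sqrt.2 hn⟩

lemma sub_sqrt_tendsto_atTop : Tendsto (fun n => n - Nat.sqrt n) atTop atTop := by
  refine tendsto_atTop_mono' atTop ?_ sqrt_tendsto_atTop
  filter_upwards [eventually_ge_atTop 4] with n hn
  have h1 : 2 ≤ Nat.sqrt n := Nat.le_sqrt.2 (by omega)
  have h2 := Nat.sqrt_le n
  have h3 : 2 * Nat.sqrt n ≤ Nat.sqrt n * Nat.sqrt n := Nat.mul_le_mul_right _ h1
  omega

lemma sqrt_div_tendsto_zero : Tendsto (fun n : ℕ => (Nat.sqrt n : ℝ) / n) atTop (𝓝 0) := by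
  refine squeeze_zero' (Eventually.of_forall fun n => by positivity) ?_
    (tendsto_inv_atTop_zero.comp (tendsto_natCast_atTop_atTop.comp sqrt_tendsto_atTop))
  filter_upwards [eventually_ge_atTop 1] with n hn
  have hs : 1 ≤ Nat.sqrt n := Nat.le_sqrt.2 (by omega)
  have hn' : (0:ℝ) < n := by positivity
  have hs' : (0:ℝ) < Nat.sqrt n := by exact_mod_cast hs
  show (Nat.sqrt n : ℝ) / n ≤ ((Nat.sqrt n : ℝ))⁻¹
  rw [div_le_iff₀ hn', inv_mul_eq_div, le_div_iff₀ hs']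
  exact_mod_cast Nat.sqrt_le n

lemma sqrt_step (n : ℕ) : Nat.sqrt (n+1) = Nat.sqrt n ∨ Nat.sqrt (n+1) = Nat.sqrt n + 1 := by
  have h1 : Nat.sqrt n ≤ Nat.sqrt (n+1) := Nat.sqrt_le_sqrt (by omega)
  have h2 := Nat.sqrt_succ_le_succ_sqrt n
  simp only [Nat.succ_eq_add_one] at h2
  omega

/-- two convergent sequences with limits `a < b` can be merged into a
sequence whose Cesàro mean is `α * a + β * b`, for any convex coefficients `α, β`. -/
theorem merge_cesaro_convex_combination (as bs : ℕ → ℝ) (a b : ℝ)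
    (ha : Tendsto as atTop (𝓝 a)) (hb : Tendsto bs atTop (𝓝 b)) (hab : a < b)
    (α β : ℝ) (hα : 0 ≤ α) (hβ : 0 ≤ β) (hαβ : α + β = 1) :
    ∃ (d : ℕ → ℝ) (σ τ : ℕ → ℕ), StrictMono σ ∧ StrictMono τ ∧
      Disjoint (Set.range σ) (Set.range τ) ∧
      Set.range σ ∪ Set.range τ = Set.univ ∧
      (∀ n, d (σ n) = as n) ∧ (∀ n, d (τ n) = bs n) ∧
      Tendsto (fun n => (∑ i ∈ Finset.range n, d i) / (n : ℝ)) atTop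
        (𝓝 (α * a + β * b)) := by
  have hβ' : β = 1 - α := by linarith
  subst hβ'
  have hα1 : α ≤ 1 := by linarith
  rcases eq_or_lt_of_le hα with h0 | h0
  · -- α = 0 : use sqrt as count function
    refine key_merge as bs a b ha hb α Nat.sqrt (by simp) sqrt_step
      sqrt_tendsto_atTop sub_sqrt_tendsto_atTop ?_
    rw [← h0]; exact sqrt_div_tendsto_zero
  rcases eq_or_lt_of_le hα1 with h1 | h1
  · -- α = 1 : use n - sqrt n as count function
    refine key_merge as bs a b ha hb α (fun n => n - Nat.sqrt n) (by simp) ?_ 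
      sub_sqrt_tendsto_atTop ?_ ?_
    · intro n
      have h2 : Nat.sqrt n ≤ n := Nat.sqrt_le_self n
      have h3 : Nat.sqrt (n+1) ≤ n+1 := Nat.sqrt_le_self (n+1)
      show n + 1 - Nat.sqrt (n+1) = n - Nat.sqrt n ∨ n + 1 - Nat.sqrt (n+1) = n - Nat.sqrt n + 1
      rcases sqrt_step n with h | h <;> omega
    · refine sqrt_tendsto_atTop.congr fun n => ?_
      show Nat.sqrt n = n - (n - Nat.sqrt n)
      have := Nat.sqrt_le_self n
      omega
    · have h2 : Tendsto (fun n : ℕ => 1 - (Nat.sqrt n : ℝ) / n) atTop (𝓝 1) := by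
        have := tendsto_const_nhds.sub sqrt_div_tendsto_zero (f := fun _ : ℕ => (1:ℝ))
        simpa using this
      rw [h1]
      refine h2.congr' ?_
      filter_upwards [eventually_ge_atTop 1] with n hn
      have hn' : (n : ℝ) ≠ 0 := by positivity
      rw [Nat.cast_sub (Nat.sqrt_le_self n)]
      field_simp
  · -- 0 < α < 1 : use ⌊α n⌋ as count function
    have hmul : Tendsto (fun n : ℕ => α * (n : ℝ)) atTop atTop :=
      (tendsto_natCast_atTop_atTop).const_mul_atTop h0
    refine key_merge as bs a b ha hb α (fun n => ⌊α * (n : ℝ)⌋₊) (by simp) ?_ ?_ ?_ ?_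
    · intro n
      have hmono : ⌊α * (n : ℝ)⌋₊ ≤ ⌊α * ((n+1 : ℕ) : ℝ)⌋₊ := by
        apply Nat.floor_le_floor
        have : ((n:ℝ)) ≤ ((n+1 : ℕ) : ℝ) := by push_cast; linarith
        nlinarith
      have hup : ⌊α * ((n+1 : ℕ) : ℝ)⌋₊ ≤ ⌊α * (n : ℝ)⌋₊ + 1 := by
        have h2 : α * ((n+1 : ℕ) : ℝ) ≤ α * (n : ℝ) + 1 := by push_cast; nlinarith
        calc ⌊α * ((n+1 : ℕ) : ℝ)⌋₊ ≤ ⌊α * (n : ℝ) + 1⌋₊ := Nat.floor_le_floor h2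
          _ = ⌊α * (n : ℝ)⌋₊ + 1 := by
            rw [Nat.floor_add_one (by positivity)]
      show ⌊α * ((n+1 : ℕ) : ℝ)⌋₊ = ⌊α * (n : ℝ)⌋₊ ∨ ⌊α * ((n+1 : ℕ) : ℝ)⌋₊ = ⌊α * (n : ℝ)⌋₊ + 1
      omega
    · rw [tendsto_atTop]
      intro K
      filter_upwards [hmul.eventually_ge_atTop (K : ℝ)] with n hn
      exact Nat.le_floor hn
    · rw [tendsto_atTop]
      intro K
      have h2 : Tendsto (fun n : ℕ => (1 - α) * (n : ℝ)) atTop atTop :=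
        (tendsto_natCast_atTop_atTop).const_mul_atTop (by linarith)
      filter_upwards [h2.eventually_ge_atTop (K : ℝ)] with n hn
      have hfl : (⌊α * (n : ℝ)⌋₊ : ℝ) ≤ α * n := Nat.floor_le (by positivity)
      have : (⌊α * (n : ℝ)⌋₊ : ℝ) + K ≤ (n : ℝ) := by linarith
      have h3 : ⌊α * (n : ℝ)⌋₊ + K ≤ n := by exact_mod_cast this
      omega
    · exact (tendsto_nat_floor_mul_div_atTop hα).comp tendsto_natCast_atTop_atTop
end

section
/- Let H ⊆ ℝ be a bounded, countably infinite set, let m = liminf H and M = limsup H, and let l be chosen with m ≤ l ≤ M. Then there exists an injective sequence (a_n) with {a_n : n ∈ ℕ} = H such that lim_{n→∞} (a_1 + ⋯ + a_n)/n = l. -/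
/-!
The accumulation points `α = sInf H'` and `β = sSup H'` lie in `H'`, so at every stage
`H` still has unused elements as close to `α` or to `β` as we like. Enumerate `H` greedily: at
the square steps take the first element of a fixed enumeration of `H` not used yet, which makes
the sequence exhaust `H` at the cost of only `O(√n)` of the first `n` steps; at every other
step `n` take a fresh element within `1 / (n + 1)` of `β` if the partial sum lags behind `n l`,
and of `α` otherwise. The defect `D n = ∑_{i<n} a i - n l` is then pulled back towards `0` at
every non-square step, which keeps `|D n| ≤ K (√n + 2) + ∑_{i<n} 1 / (i + 1) = o(n)` for any
bound `K` on `|a n - l|`.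
-/

open Filter Topology

def accPts (H : Set ℝ) : Set ℝ := {x | AccPt x (𝓟 H)}

theorem AccPt.exists_mem_nhds_notMem_finite {X : Type*} [TopologicalSpace X] [T1Space X]
    {x : X} {H F U : Set X} (hx : AccPt x (𝓟 H)) (hF : F.Finite) (hU : U ∈ 𝓝 x) :
    ∃ y ∈ H, y ∉ F ∧ y ∈ U := by
  have hF' : ∀ᶠ y in 𝓝[≠] x, y ∉ F := nhdsNE_le_cofinite x hF.eventually_cofinite_notMem
  have hU' : ∀ᶠ y in 𝓝[≠] x, y ∈ U := nhdsWithin_le_nhds hU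
  exact ((accPt_iff_frequently_nhdsNE.mp hx).and_eventually (hF'.and hU')).exists

theorem isCompact_accPts {H : Set ℝ} (hH : Bornology.IsBounded H) : IsCompact (accPts H) :=
  Metric.isCompact_of_isClosed_isBounded (isClosed_derivedSet H)
    (hH.closure.subset (derivedSet_subset_closure H))

theorem accPts_nonempty {H : Set ℝ} (hH : Bornology.IsBounded H) (hi : H.Infinite) :
    (accPts H).Nonempty :=
  let ⟨x, _, hx⟩ := hi.exists_accPt_of_subset_isCompact hH.isCompact_closure subset_closure
  ⟨x, hx⟩

theorem count_isSquare_le_sqrt_add_one (n : ℕ) : Nat.count IsSquare n ≤ Nat.sqrt n + 1 := by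
  rw [Nat.count_eq_card_filter_range, ← Finset.card_range (Nat.sqrt n + 1)]
  refine Finset.card_le_card_of_injOn Nat.sqrt (fun i hi => ?_) (fun i hi j hj hij => ?_)
  · simp only [Finset.coe_filter, Finset.mem_range, Set.mem_ofPred_eq] at hi
    simpa [Nat.lt_succ_iff] using Nat.sqrt_le_sqrt hi.1.le
  · simp only [Finset.coe_filter, Finset.mem_range, Set.mem_ofPred_eq] at hi hj
    obtain ⟨r, rfl⟩ := hi.2
    obtain ⟨s, rfl⟩ := hj.2
    obtain rfl : r = s := by simpa [Nat.sqrt_eq] using hij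
    rfl

theorem infinite_setOf_isSquare : {n : ℕ | IsSquare n}.Infinite :=
  Set.infinite_of_injective_forall_mem (f := fun k => k * k) (fun _ _ h => Nat.mul_self_inj.mp h)
    fun k => ⟨k, rfl⟩

theorem tendsto_count_isSquare_div :
    Tendsto (fun n : ℕ => (Nat.count IsSquare n : ℝ) / n) atTop (𝓝 0) := by
  have hlim : Tendsto (fun n : ℕ => 2 / √(n : ℝ)) atTop (𝓝 0) :=
    tendsto_const_nhds.div_atTop (Real.tendsto_sqrt_atTop.comp tendsto_natCast_atTop_atTop)
  refine squeeze_zero' (.of_forall fun n => by positivity) ?_ hlim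
  filter_upwards [eventually_ge_atTop 1] with n hn
  have hn' : (1 : ℝ) ≤ n := by exact_mod_cast hn
  have hsqrt : 1 ≤ √(n : ℝ) := Real.one_le_sqrt.mpr hn'
  have hcount : (Nat.count IsSquare n : ℝ) ≤ 2 * √(n : ℝ) := calc
    (Nat.count IsSquare n : ℝ) ≤ Nat.sqrt n + 1 := by
      exact_mod_cast count_isSquare_le_sqrt_add_one n
    _ ≤ 2 * √(n : ℝ) := by linarith [Real.nat_sqrt_le_real_sqrt (a := n)]
  calc (Nat.count IsSquare n : ℝ) / n ≤ 2 * √(n : ℝ) / n := by gcongr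
    _ = 2 / √(n : ℝ) := by
      rw [div_eq_div_iff (by positivity) (by positivity), mul_assoc,
        Real.mul_self_sqrt (by positivity)]

namespace GreedyEnumeration

variable {α : Type*} (p : ℕ → Prop) [DecidablePred p] (f : ℕ → α)
  (hf : ∀ L : List α, ∃ j, f j ∉ L) (g : List α → α)

open Classical in
/-- At the steps `n` with `p n`, the first value of `f` not used so far: this is what makes the
enumeration exhaust `range f`. -/
noncomputable def next (L : List α) : α :=
  if p L.length then f (Nat.find (hf L)) else g L

noncomputable def history : ℕ → List α
  | 0 => []
  | n + 1 => history n ++ [next p f hf g (history n)]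

noncomputable def enum (n : ℕ) : α := next p f hf g (history p f hf g n)

theorem history_eq (n : ℕ) : history p f hf g n = (List.range n).map (enum p f hf g) := by
  induction n with
  | zero => rfl
  | succ n ih => rw [history, List.range_succ, List.map_append, ← ih]; rfl

theorem length_history (n : ℕ) : (history p f hf g n).length = n := by
  simp [history_eq]

theorem enum_eq_of_not {n : ℕ} (hn : ¬ p n) : enum p f hf g n = g (history p f hf g n) := by
  rw [enum, next, length_history, if_neg hn]

theorem enum_notMem_history (hg : ∀ L, g L ∉ L) (n : ℕ) :
    enum p f hf g n ∉ history p f hf g n := by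
  classical
  rw [enum, next]
  split_ifs
  · exact Nat.find_spec (hf _)
  · exact hg _

theorem enum_injective (hg : ∀ L, g L ∉ L) : Function.Injective (enum p f hf g) := by
  intro i j hij
  by_contra hne
  rcases lt_or_gt_of_ne hne with hlt | hlt
  · refine enum_notMem_history p f hf g hg j ?_
    rw [history_eq]
    exact List.mem_map.mpr ⟨i, List.mem_range.mpr hlt, hij⟩
  · refine enum_notMem_history p f hf g hg i ?_
    rw [history_eq]
    exact List.mem_map.mpr ⟨j, List.mem_range.mpr hlt, hij.symm⟩

theorem mem_history_of_lt_count (n : ℕ) : ∀ j < Nat.count p n, f j ∈ history p f hf g n := by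
  classical
  induction n with
  | zero => simp
  | succ n ih =>
    intro j hj
    rw [history, List.mem_append]
    by_cases hn : p n
    · rcases (Nat.lt_succ_iff.mp (by simpa [Nat.count_succ, hn] using hj)).lt_or_eq with hj | rfl
      · exact .inl (ih j hj)
      · by_cases hmem : f (Nat.count p n) ∈ history p f hf g n
        · exact .inl hmem
        · have hfind : Nat.find (hf (history p f hf g n)) = Nat.count p n :=
            (Nat.find_eq_iff _).mpr ⟨hmem, fun k hk => not_not.mpr (ih k hk)⟩
          right
          simp [next, length_history, hn, hfind]
    · exact .inl (ih j (by simpa [Nat.count_succ, hn] using hj))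

theorem range_enum (hp : {n | p n}.Infinite) (hg : ∀ L, g L ∈ Set.range f) :
    Set.range (enum p f hf g) = Set.range f := by
  classical
  refine subset_antisymm (Set.range_subset_iff.mpr fun n => ?_) ?_
  · rw [enum, next]
    split_ifs
    exacts [Set.mem_range_self _, hg _]
  · rintro _ ⟨j, rfl⟩
    have hcount : j < Nat.count p (Nat.nth p j + 1) := by
      rw [Nat.count_succ, Nat.count_nth_of_infinite hp, if_pos (Nat.nth_mem_of_infinite hp j)]
      exact j.lt_succ_self
    have hmem := mem_history_of_lt_count p f hf g _ j hcount
    rw [history_eq, List.mem_map] at hmem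
    obtain ⟨i, -, hi⟩ := hmem
    exact ⟨i, hi⟩

end GreedyEnumeration

theorem Set.Infinite.exists_enumeration_of_forall_exists_notMem {α : Type*} {H : Set α}
    (hi : H.Infinite) (hc : H.Countable) {p : ℕ → Prop} [DecidablePred p]
    (hp : {n | p n}.Infinite)
    (R : List α → α → Prop) (hR : ∀ L : List α, ∃ y ∈ H, y ∉ L ∧ R L y) :
    ∃ a : ℕ → α, Function.Injective a ∧ Set.range a = H ∧
      ∀ n, ¬ p n → R ((List.range n).map a) (a n) := by
  obtain ⟨f, rfl⟩ := hc.exists_eq_range hi.nonempty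
  have hf (L : List α) : ∃ j, f j ∉ L := by
    by_contra! h
    exact hi (L.finite_toSet.subset (Set.range_subset_iff.mpr h))
  choose g hgH hgL hgR using hR
  refine ⟨GreedyEnumeration.enum p f hf g, GreedyEnumeration.enum_injective p f hf g hgL,
    GreedyEnumeration.range_enum p f hf g hp hgH, fun n hn => ?_⟩
  rw [GreedyEnumeration.enum_eq_of_not p f hf g hn, ← GreedyEnumeration.history_eq]
  exact hgR _

section SelfCorrecting

variable {p : ℕ → Prop} [DecidablePred p] {D ε : ℕ → ℝ} {K : ℝ}

theorem abs_le_mul_count_add_sum_of_self_correcting (h0 : D 0 = 0) (hε : ∀ n, 0 ≤ ε n)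
    (hK : ∀ n, |D (n + 1) - D n| ≤ K)
    (hneg : ∀ n, ¬ p n → D n < 0 → -ε n ≤ D (n + 1) - D n)
    (hpos : ∀ n, ¬ p n → 0 ≤ D n → D (n + 1) - D n ≤ ε n) (n : ℕ) :
    |D n| ≤ K * (Nat.count p n + 1) + ∑ i ∈ Finset.range n, ε i := by
  have hK0 : 0 ≤ K := (abs_nonneg _).trans (hK 0)
  induction n with
  | zero => simpa [h0] using hK0
  | succ n ih =>
    have hsum : 0 ≤ ∑ i ∈ Finset.range n, ε i := Finset.sum_nonneg fun i _ => hε i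
    have hcount : 0 ≤ K * Nat.count p n := mul_nonneg hK0 (Nat.cast_nonneg _)
    obtain ⟨hstep₁, hstep₂⟩ := abs_le.mp (hK n)
    obtain ⟨ih₁, ih₂⟩ := abs_le.mp ih
    rw [Nat.count_succ, Finset.sum_range_succ, abs_le]
    by_cases hp : p n
    · simp only [hp, if_true, Nat.cast_add, Nat.cast_one]
      constructor <;> linarith [hε n]
    · simp only [hp, if_false, add_zero]
      rcases lt_or_ge (D n) 0 with hD | hD
      · constructor <;> linarith [hε n, hneg n hp hD]
      · constructor <;> linarith [hε n, hpos n hp hD]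

theorem tendsto_div_of_abs_le_mul_count_add_sum
    (hp : Tendsto (fun n : ℕ => (Nat.count p n : ℝ) / n) atTop (𝓝 0))
    (hε : Tendsto ε atTop (𝓝 0))
    (hD : ∀ n, |D n| ≤ K * (Nat.count p n + 1) + ∑ i ∈ Finset.range n, ε i) :
    Tendsto (fun n : ℕ => D n / n) atTop (𝓝 0) := by
  have hbound : Tendsto (fun n : ℕ =>
      K * ((Nat.count p n : ℝ) / n) + K / n + (∑ i ∈ Finset.range n, ε i) / n) atTop (𝓝 0) := by
    simpa using ((hp.const_mul K).add (tendsto_const_div_atTop_nhds_zero_nat K)).add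
      (by simpa [inv_mul_eq_div] using hε.cesaro)
  refine squeeze_zero_norm (fun n => ?_) hbound
  rw [Real.norm_eq_abs, abs_div, Nat.abs_cast, mul_div_assoc', ← add_div, ← add_div]
  exact div_le_div_of_nonneg_right (by simpa [mul_add] using hD n) n.cast_nonneg

end SelfCorrecting

theorem tendsto_sum_div_of_balancing {p : ℕ → Prop} [DecidablePred p] {a ε : ℕ → ℝ}
    {α β l r : ℝ} (hαl : α ≤ l) (hlβ : l ≤ β) (hr : ∀ n, |a n - l| ≤ r) (hε₀ : ∀ n, 0 ≤ ε n)
    (hε : Tendsto ε atTop (𝓝 0))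
    (hp : Tendsto (fun n : ℕ => (Nat.count p n : ℝ) / n) atTop (𝓝 0))
    (ha : ∀ n, ¬ p n → |a n - if ∑ i ∈ Finset.range n, a i < l * n then β else α| < ε n) :
    Tendsto (fun n : ℕ => (∑ i ∈ Finset.range n, a i) / n) atTop (𝓝 l) := by
  set D : ℕ → ℝ := fun n => ∑ i ∈ Finset.range n, a i - n * l
  have hstep (n : ℕ) : D (n + 1) - D n = a n - l := by
    simp only [D, Finset.sum_range_succ, Nat.cast_succ]; ring
  have hbound := abs_le_mul_count_add_sum_of_self_correcting (p := p) (by simp [D]) hε₀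
    (fun n => hstep n ▸ hr n)
    (fun n hn hD => by
      have hlag : ∑ i ∈ Finset.range n, a i < l * n := by simp only [D] at hD; linarith
      have := abs_lt.mp (ha n hn)
      rw [if_pos hlag] at this
      rw [hstep]; linarith)
    (fun n hn hD => by
      have hlead : ¬ ∑ i ∈ Finset.range n, a i < l * n := by simp only [D] at hD; linarith
      have := abs_lt.mp (ha n hn)
      rw [if_neg hlead] at this
      rw [hstep]; linarith)
  have hD := tendsto_div_of_abs_le_mul_count_add_sum hp hε hbound
  refine (zero_add l ▸ hD.add_const l).congr' ?_
  filter_upwards [eventually_ne_atTop 0] with n hn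
  field_simp
  ring

/-- a bounded countably infinite set can be enumerated so that the
Cesàro means converge to any prescribed `l` with `liminf H ≤ l ≤ limsup H`. -/
theorem exists_enumeration_cesaro_eq (H : Set ℝ) (hbd : Bornology.IsBounded H)
    (hc : H.Countable) (hi : H.Infinite) (l : ℝ)
    (hl₁ : sInf (accPts H) ≤ l) (hl₂ : l ≤ sSup (accPts H)) :
    ∃ a : ℕ → ℝ, Function.Injective a ∧ Set.range a = H ∧
      Tendsto (fun n => (∑ i ∈ Finset.range n, a i) / (n : ℝ)) atTop (𝓝 l) := by
  set α := sInf (accPts H)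
  set β := sSup (accPts H)
  have hα : AccPt α (𝓟 H) := (isCompact_accPts hbd).sInf_mem (accPts_nonempty hbd hi)
  have hβ : AccPt β (𝓟 H) := (isCompact_accPts hbd).sSup_mem (accPts_nonempty hbd hi)
  have hnear (L : List ℝ) {x : ℝ} (hx : AccPt x (𝓟 H)) :
      ∃ y ∈ H, y ∉ L ∧ |y - x| < 1 / (L.length + 1) := by
    simpa [← Real.dist_eq] using
      hx.exists_mem_nhds_notMem_finite L.finite_toSet (Metric.ball_mem_nhds _ (by positivity))
  obtain ⟨a, ha_inj, ha_range, ha_rule⟩ := hi.exists_enumeration_of_forall_exists_notMem hc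
    infinite_setOf_isSquare
    (fun L y => |y - if L.sum < l * L.length then β else α| < 1 / (L.length + 1))
    fun L => hnear L (by split_ifs <;> assumption)
  obtain ⟨r, hr⟩ := hbd.subset_closedBall l
  refine ⟨a, ha_inj, ha_range, tendsto_sum_div_of_balancing hl₁ hl₂
    (fun n => Metric.mem_closedBall.mp (hr (ha_range ▸ Set.mem_range_self n)))
    (fun n => by positivity) tendsto_one_div_add_atTop_nhds_zero_nat tendsto_count_isSquare_div
    fun n hn => ?_⟩
  have hsum : ((List.range n).map a).sum = ∑ i ∈ Finset.range n, a i := by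
    rw [Finset.sum_eq_multiset_sum]; rfl
  simpa [hsum] using ha_rule n hn
end

section
/- Let H ⊆ ℝ be a bounded, countably infinite set with liminf H < limsup H. Then there exists an injective sequence (d_n) with {d_n : n ∈ ℕ} = H such that lim_{n→∞} (d_1 + ⋯ + d_n)/n does not exist. -/
open Filter Topology

/-!
Take two accumulation points `x < y` of `H` and levels `b₁ < c₁ < c₂ < b₂` between them.
The points of `H` below `b₁`, and those above `b₂`, form infinite reservoirs. Build the
enumeration as an increasing chain of finite injective lists: at step `k` append the `k`-th
point of a fixed enumeration of `H` (if it is not yet listed), then enough fresh points of the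
lower reservoir (for even `k`) or the upper one (for odd `k`) to drag the running mean below
`c₁`, resp. above `c₂`. Every point of `H` is listed exactly once, and the Cesàro means oscillate.
-/

namespace List

variable {α : Type*}

-- `x₀` is a junk value, never read once `k ≤ (F k).length` for all `k`.
def prefixLimit (F : ℕ → List α) (x₀ : α) (n : ℕ) : α := (F (n + 1)).getD n x₀

variable {F : ℕ → List α}

theorem prefixLimit_eq_getElem (hF : ∀ k, F k <+: F (k + 1)) (hlen : ∀ k, k ≤ (F k).length)
    (x₀ : α) {n m : ℕ} (hn : n < (F m).length) : prefixLimit F x₀ n = (F m)[n] := by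
  have hn' : n < (F (n + 1)).length := Nat.lt_of_lt_of_le n.lt_succ_self (hlen _)
  rw [prefixLimit, getD_eq_getElem _ _ hn']
  rcases le_total (n + 1) m with h | h
  · exact (Nat.rel_of_forall_rel_succ_of_le _ hF h).getElem hn'
  · exact ((Nat.rel_of_forall_rel_succ_of_le _ hF h).getElem hn).symm

theorem map_range_prefixLimit (hF : ∀ k, F k <+: F (k + 1)) (hlen : ∀ k, k ≤ (F k).length)
    (x₀ : α) (m : ℕ) : (range (F m).length).map (prefixLimit F x₀) = F m :=
  ext_getElem (by simp) fun n _ hn => by simp [prefixLimit_eq_getElem hF hlen x₀ hn]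

theorem prefixLimit_injective (hF : ∀ k, F k <+: F (k + 1)) (hlen : ∀ k, k ≤ (F k).length)
    (hnodup : ∀ k, (F k).Nodup) (x₀ : α) : Function.Injective (prefixLimit F x₀) := by
  intro n m h
  have hK := hlen (max n m + 1)
  rw [prefixLimit_eq_getElem hF hlen x₀ (m := max n m + 1) (by omega),
    prefixLimit_eq_getElem hF hlen x₀ (m := max n m + 1) (by omega)] at h
  exact (hnodup _).getElem_inj_iff.1 h

theorem range_prefixLimit (hF : ∀ k, F k <+: F (k + 1)) (hlen : ∀ k, k ≤ (F k).length)
    (x₀ : α) : Set.range (prefixLimit F x₀) = {x | ∃ k, x ∈ F k} := by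
  ext x
  constructor
  · rintro ⟨n, rfl⟩
    have hn : n < (F (n + 1)).length := Nat.lt_of_lt_of_le n.lt_succ_self (hlen _)
    exact ⟨n + 1, prefixLimit_eq_getElem hF hlen x₀ hn ▸ getElem_mem hn⟩
  · rintro ⟨k, hk⟩
    obtain ⟨n, hn, rfl⟩ := mem_iff_getElem.1 hk
    exact ⟨n, prefixLimit_eq_getElem hF hlen x₀ hn⟩

end List

section Extension

variable {α : Type*}

def ExtendableIn (H : Set α) (P : List α → Prop) : Prop :=
  ∀ L : List α, L.Nodup → (∀ x ∈ L, x ∈ H) →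
    ∃ t ≠ [], (L ++ t).Nodup ∧ (∀ x ∈ t, x ∈ H) ∧ P (L ++ t)

theorem ExtendableIn.mono {H : Set α} {P Q : List α → Prop} (hP : ExtendableIn H P)
    (hPQ : ∀ L, P L → Q L) : ExtendableIn H Q := fun L hL hLH =>
  let ⟨t, ht, hnodup, htH, hPt⟩ := hP L hL hLH
  ⟨t, ht, hnodup, htH, hPQ _ hPt⟩

theorem ExtendableIn.exists_append_mem {H : Set α} {P : List α → Prop} (hP : ExtendableIn H P)
    {L : List α} (hL : L.Nodup) (hLH : ∀ x ∈ L, x ∈ H) {z : α} (hz : z ∈ H) :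
    ∃ t ≠ [], (L ++ t).Nodup ∧ (∀ x ∈ t, x ∈ H) ∧ z ∈ L ++ t ∧ P (L ++ t) := by
  by_cases hzL : z ∈ L
  · obtain ⟨t, ht, hnodup, htH, hPt⟩ := hP L hL hLH
    exact ⟨t, ht, hnodup, htH, List.mem_append_left _ hzL, hPt⟩
  · obtain ⟨t, -, hnodup, htH, hPt⟩ := hP (L ++ [z]) (by simpa [List.nodup_append] using
      ⟨hL, fun a ha h => hzL (h ▸ ha)⟩) (by simpa [or_imp, forall_and] using ⟨hLH, hz⟩)
    refine ⟨z :: t, List.cons_ne_nil _ _, by simpa using hnodup, ?_, by simp, by simpa using hPt⟩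
    simpa using ⟨hz, htH⟩

theorem Set.Countable.exists_enumeration_of_extendableIn {H : Set α} (hc : H.Countable)
    (P : ℕ → List α → Prop) (hP : ∀ k, ExtendableIn H (P k)) :
    ∃ d : ℕ → α, Function.Injective d ∧ Set.range d = H ∧
      ∀ k, ∃ n > k, P k ((List.range n).map d) := by
  obtain ⟨t₀, ht₀, -, ht₀H, -⟩ := hP 0 [] List.nodup_nil (by simp)
  obtain ⟨e, rfl⟩ := hc.exists_eq_range ⟨_, ht₀H _ (List.head_mem ht₀)⟩
  choose! ext hext_ne hext_nodup hext_mem hext_covers hext_P using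
    fun k (L : List α) (hL : L.Nodup) hLH z (hz : z ∈ Set.range e) =>
      (hP k).exists_append_mem hL hLH hz
  obtain ⟨F, hF₀, hF⟩ : ∃ F : ℕ → List α, F 0 = [] ∧ ∀ k, F (k + 1) = F k ++ ext k (F k) (e k) :=
    ⟨fun k => Nat.rec [] (fun k L => L ++ ext k L (e k)) k, rfl, fun _ => rfl⟩
  have hinv : ∀ k, (F k).Nodup ∧ ∀ x ∈ F k, x ∈ Set.range e := by
    intro k
    induction k with
    | zero => simp [hF₀]
    | succ k ih =>
      rw [hF]
      refine ⟨hext_nodup k _ ih.1 ih.2 _ ⟨k, rfl⟩, fun x hx => ?_⟩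
      rcases List.mem_append.1 hx with hx | hx
      exacts [ih.2 x hx, hext_mem k _ ih.1 ih.2 _ ⟨k, rfl⟩ x hx]
  have hpre : ∀ k, F k <+: F (k + 1) := fun k => hF k ▸ List.prefix_append _ _
  have hlen : ∀ k, k ≤ (F k).length := by
    intro k
    induction k with
    | zero => exact Nat.zero_le _
    | succ k ih =>
      have := List.length_pos_iff.2 (hext_ne k _ (hinv k).1 (hinv k).2 _ ⟨k, rfl⟩)
      rw [hF, List.length_append]
      omega
  refine ⟨List.prefixLimit F (e 0), List.prefixLimit_injective hpre hlen (fun k => (hinv k).1) _,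
    ?_, fun k => ⟨(F (k + 1)).length, hlen _, ?_⟩⟩
  · rw [List.range_prefixLimit hpre hlen]
    ext x
    exact ⟨fun ⟨k, hk⟩ => (hinv k).2 x hk,
      fun ⟨k, hk⟩ => ⟨k + 1, hk ▸ hF k ▸ hext_covers k _ (hinv k).1 (hinv k).2 _ ⟨k, rfl⟩⟩⟩
  · rw [List.map_range_prefixLimit hpre hlen, hF]
    exact hext_P k _ (hinv k).1 (hinv k).2 _ ⟨k, rfl⟩

theorem Set.Countable.exists_enumeration_frequently {H : Set α} (hc : H.Countable)
    {P Q : List α → Prop} (hP : ExtendableIn H P) (hQ : ExtendableIn H Q) :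
    ∃ d : ℕ → α, Function.Injective d ∧ Set.range d = H ∧
      (∃ᶠ n in atTop, P ((List.range n).map d)) ∧ ∃ᶠ n in atTop, Q ((List.range n).map d) := by
  obtain ⟨d, hd, hrange, hPQ⟩ := hc.exists_enumeration_of_extendableIn
    (fun k => if Even k then P else Q) fun k => by split_ifs <;> assumption
  refine ⟨d, hd, hrange, frequently_atTop.2 fun a => ?_, frequently_atTop.2 fun a => ?_⟩
  · obtain ⟨n, hn, h⟩ := hPQ (2 * a)
    exact ⟨n, by omega, by simpa using h⟩
  · obtain ⟨n, hn, h⟩ := hPQ (2 * a + 1)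
    exact ⟨n, by omega, by simpa [Nat.not_even_two_mul_add_one] using h⟩

theorem Set.Infinite.exists_nodup_append_length_eq {S : Set α} (hS : S.Infinite) {L : List α}
    (hL : L.Nodup) (n : ℕ) : ∃ t : List α, t.length = n ∧ (L ++ t).Nodup ∧ ∀ x ∈ t, x ∈ S := by
  obtain ⟨s, hsS, rfl⟩ := (hS.sdiff L.finite_toSet).exists_subset_card_eq n
  refine ⟨s.toList, s.length_toList, List.nodup_append.2 ⟨hL, s.nodup_toList, ?_⟩,
    fun x hx => (hsS (Finset.mem_toList.1 hx)).1⟩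
  rintro a ha b hb rfl
  exact (hsS (Finset.mem_toList.1 hb)).2 ha

theorem extendableIn_sum_map_div_length_lt {H S : Set α} (hSH : S ⊆ H) (hS : S.Infinite)
    (f : α → ℝ) {b c : ℝ} (hf : ∀ s ∈ S, f s ≤ b) (hbc : b < c) :
    ExtendableIn H fun L => (L.map f).sum / L.length < c := by
  intro L hL _
  obtain ⟨N, hN⟩ := exists_nat_gt (((L.map f).sum - c * L.length) / (c - b))
  obtain ⟨t, ht, hnodup, htS⟩ := hS.exists_nodup_append_length_eq hL (N + 1)
  refine ⟨t, List.ne_nil_of_length_pos (by omega), hnodup, fun x hx => hSH (htS x hx), ?_⟩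
  have hsum : (t.map f).sum ≤ (N + 1 : ℕ) * b := by
    simpa [ht] using List.sum_le_card_nsmul (t.map f) b (by simpa using fun x hx => hf x (htS x hx))
  rw [div_lt_iff₀ (sub_pos.2 hbc)] at hN
  dsimp only
  rw [div_lt_iff₀ (by rw [List.length_append, ht]; positivity), List.map_append,
    List.sum_append, List.length_append, ht]
  push_cast at hsum ⊢
  linarith

end Extension

theorem Real.nontrivial_of_sInf_lt_sSup {s : Set ℝ} (h : sInf s < sSup s) : s.Nontrivial := by
  by_contra hs
  rcases (Set.not_nontrivial_iff.1 hs).eq_empty_or_singleton with rfl | ⟨a, rfl⟩ <;> simp at h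

theorem exists_enumeration_cesaro_not_convergent_general (H : Set ℝ)
    (hc : H.Countable)
    (hlim : sInf (accPts H) < sSup (accPts H)) :
    ∃ d : ℕ → ℝ, Function.Injective d ∧ Set.range d = H ∧
      ¬ ∃ l : ℝ, Tendsto (fun n => (∑ i ∈ Finset.range n, d i) / (n : ℝ)) atTop (𝓝 l) := by
  obtain ⟨x, hx, y, hy, hxy⟩ := (Real.nontrivial_of_sInf_lt_sSup hlim).exists_lt
  obtain ⟨b₁, hxb₁, hb₁y⟩ := exists_between hxy
  obtain ⟨c₁, hb₁c₁, hc₁y⟩ := exists_between hb₁y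
  obtain ⟨c₂, hc₁c₂, hc₂y⟩ := exists_between hc₁y
  obtain ⟨b₂, hc₂b₂, hb₂y⟩ := exists_between hc₂y
  have hlow := extendableIn_sum_map_div_length_lt Set.inter_subset_right
    (Set.Infinite.of_accPt (hx.nhds_inter (Iio_mem_nhds hxb₁))) id
    (fun s hs => hs.1.le) hb₁c₁
  have hhigh := extendableIn_sum_map_div_length_lt Set.inter_subset_right
    (Set.Infinite.of_accPt (hy.nhds_inter (Ioi_mem_nhds hb₂y))) Neg.neg
    (fun s hs => neg_le_neg hs.1.le) (neg_lt_neg hc₂b₂)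
  obtain ⟨d, hd, rfl, hbelow, habove⟩ := hc.exists_enumeration_frequently
    (hlow.mono (Q := fun L => L.sum / L.length < c₁) fun L h => by simpa using h)
    (hhigh.mono (Q := fun L => c₂ < L.sum / L.length) fun L h => by
      rwa [← List.sum_neg, neg_div, neg_lt_neg_iff] at h)
  have hmean : ∀ n, ((List.range n).map d).sum / ((List.range n).map d).length =
      (∑ i ∈ Finset.range n, d i) / n := fun n => by
    simp [Finset.sum_eq_multiset_sum, Multiset.range]
  refine ⟨d, hd, rfl, fun ⟨l, hl⟩ => ?_⟩
  have hl₁ := le_of_tendsto_of_frequently hl (hbelow.mono fun n h => (hmean n ▸ h).le)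
  have hl₂ := ge_of_tendsto_of_frequently hl (habove.mono fun n h => (hmean n ▸ h).le)
  linarith

/-- a bounded countably infinite set with `liminf H < limsup H`
can be enumerated so that the Cesàro means do not converge. -/
theorem exists_enumeration_cesaro_not_convergent (H : Set ℝ)
    (hbd : Bornology.IsBounded H) (hc : H.Countable) (hi : H.Infinite)
    (hlim : sInf (accPts H) < sSup (accPts H)) :
    ∃ d : ℕ → ℝ, Function.Injective d ∧ Set.range d = H ∧
      ¬ ∃ l : ℝ, Tendsto (fun n => (∑ i ∈ Finset.range n, d i) / (n : ℝ)) atTop (𝓝 l) :=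
  exists_enumeration_cesaro_not_convergent_general H hc hlim
end

section
/- Let H ⊆ ℝ be a bounded, countably infinite set. Then MS^a(H) = [liminf H, limsup H]; that is, a real number x is the limit of the arithmetic means A(H_n) of some approximating sequence (H_n) for H if and only if liminf H ≤ x ≤ limsup H. -/
/-!
A bounded set has only finitely many points outside any neighbourhood of
`[liminf H, limsup H]`, and the sets of an approximating sequence grow without bound, so these
exceptional points contribute `O(1 / N)` to the means and every limit of means lies in the
interval. Conversely, for `x` in the interval, a finite `G ⊆ H` can be padded to a large set and
then balanced: while its mean exceeds `x + δ`, add fresh points of `H` close to `liminf H`;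
while it is below `x - δ`, add fresh points close to `limsup H` (both are accumulation points,
so fresh points are always available). One point moves the mean of a large set by less than
`δ`, so the mean cannot jump over `[x - δ, x + δ]`. Interleaving these corrections, with
`δ = 1 / (n + 1)`, with the insertion of the `n`-th point of an enumeration of `H` yields an
approximating sequence whose means tend to `x`.
-/

open Filter Topology

/-- Arithmetic mean of a finite set of reals. -/
noncomputable def finsetMean (F : Finset ℝ) : ℝ := (∑ x ∈ F, x) / F.card

open scoped Finset

/-- `MS^a(H)`. -/
def approxMeanLimits (H : Set ℝ) : Set ℝ :=
  {x | ∃ Hn : ℕ → Finset ℝ, (∀ n, Hn n ⊆ Hn (n + 1)) ∧ (⋃ n, (Hn n : Set ℝ)) = H ∧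
    Tendsto (fun n => finsetMean (Hn n)) atTop (𝓝 x)}

theorem Finset.sum_le_sum_posPart_of_nonpos {α β : Type*} [DecidableEq α] [AddCommGroup β]
    [Lattice β] [IsOrderedAddMonoid β] (G T : Finset α) (φ : α → β)
    (h : ∀ y ∈ G, y ∉ T → φ y ≤ 0) : ∑ y ∈ G, φ y ≤ ∑ y ∈ T, (φ y)⁺ :=
  calc ∑ y ∈ G, φ y ≤ ∑ y ∈ G, if y ∈ T then (φ y)⁺ else 0 :=
        Finset.sum_le_sum fun y hy => by
          split_ifs with hyT
          exacts [le_posPart _, h y hy hyT]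
    _ = ∑ y ∈ G with y ∈ T, (φ y)⁺ := (Finset.sum_filter _ _).symm
    _ ≤ ∑ y ∈ T, (φ y)⁺ := Finset.sum_le_sum_of_subset_of_nonneg
        (fun y hy => (Finset.mem_filter.1 hy).2) fun _ _ _ => posPart_nonneg _

theorem finsetMean_sub {G : Finset ℝ} (hG : G.Nonempty) (c : ℝ) :
    finsetMean G - c = (∑ y ∈ G, (y - c)) / #G := by
  have : (#G : ℝ) ≠ 0 := by exact_mod_cast hG.card_ne_zero
  rw [finsetMean, Finset.sum_sub_distrib, Finset.sum_const, nsmul_eq_mul]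
  field_simp

theorem sub_finsetMean {G : Finset ℝ} (hG : G.Nonempty) (c : ℝ) :
    c - finsetMean G = (∑ y ∈ G, (c - y)) / #G := by
  rw [← neg_sub, finsetMean_sub hG, ← neg_div, ← Finset.sum_neg_distrib]
  simp only [neg_sub]

theorem tendsto_card_atTop_of_monotone {α : Type*} {F : ℕ → Finset α} (hF : Monotone F)
    (hinf : (⋃ n, (F n : Set α)).Infinite) : Tendsto (fun n => #(F n)) atTop atTop := by
  refine tendsto_atTop_atTop.2 fun m => ?_
  obtain ⟨s, hs, rfl⟩ := hinf.exists_subset_card_eq m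
  obtain ⟨N, hN⟩ := Directed.exists_mem_subset_of_finset_subset_biUnion
    (Monotone.directed_le fun _ _ h => Finset.coe_subset.2 (hF h)) hs
  exact ⟨N, fun n hn => Finset.card_le_card (Finset.coe_subset.1 hN |>.trans (hF hn))⟩

theorem finsetMean_sub_le {G : Finset ℝ} (hG : G.Nonempty) (T : Finset ℝ) {c : ℝ}
    (h : ∀ y ∈ G, y ∉ T → y ≤ c) : finsetMean G - c ≤ (∑ y ∈ T, (y - c)⁺) / #G := by
  rw [finsetMean_sub hG]
  gcongr
  exact Finset.sum_le_sum_posPart_of_nonpos G T _ fun y hy hyT => sub_nonpos.2 (h y hy hyT)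

theorem sub_finsetMean_le {G : Finset ℝ} (hG : G.Nonempty) (T : Finset ℝ) {c : ℝ}
    (h : ∀ y ∈ G, y ∉ T → c ≤ y) : c - finsetMean G ≤ (∑ y ∈ T, (c - y)⁺) / #G := by
  rw [sub_finsetMean hG]
  gcongr
  exact Finset.sum_le_sum_posPart_of_nonpos G T _ fun y hy hyT => sub_nonpos.2 (h y hy hyT)

theorem mem_Icc_of_tendsto_finsetMean {Hn : ℕ → Finset ℝ} {x L U : ℝ} (T : Finset ℝ)
    (hT : ∀ n, ∀ y ∈ Hn n, y ∉ T → y ∈ Set.Icc L U)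
    (hcard : Tendsto (fun n => #(Hn n)) atTop atTop)
    (hlim : Tendsto (fun n => finsetMean (Hn n)) atTop (𝓝 x)) : x ∈ Set.Icc L U := by
  have hcardR : Tendsto (fun n => (#(Hn n) : ℝ)) atTop atTop :=
    tendsto_natCast_atTop_atTop.comp hcard
  have hne : ∀ᶠ n in atTop, (Hn n).Nonempty :=
    (hcard.eventually_ge_atTop 1).mono fun n hn => Finset.card_pos.1 hn
  constructor
  · have := le_of_tendsto_of_tendsto (tendsto_const_nhds.sub hlim)
      (tendsto_const_nhds.div_atTop hcardR)
      (hne.mono fun n hn => sub_finsetMean_le hn T fun y hy hyT => (hT n y hy hyT).1)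
    linarith
  · have := le_of_tendsto_of_tendsto (hlim.sub_const U) (tendsto_const_nhds.div_atTop hcardR)
      (hne.mono fun n hn => finsetMean_sub_le hn T fun y hy hyT => (hT n y hy hyT).2)
    linarith

theorem finite_inter_of_disjoint_accPts {H C : Set ℝ} (hbd : Bornology.IsBounded H)
    (hC : IsClosed C) (hdisj : Disjoint C (accPts H)) : (H ∩ C).Finite := by
  by_contra hinf
  obtain ⟨z, -, hz⟩ := Set.Infinite.exists_accPt_of_subset_isCompact hinf
    hbd.isCompact_closure (Set.inter_subset_left.trans subset_closure)
  have hzC : z ∈ C := closure_minimal Set.inter_subset_right hC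
    (mem_closure_iff_clusterPt.2 hz.clusterPt)
  exact hdisj.ne_of_mem hzC (hz.mono (principal_mono.2 Set.inter_subset_left)) rfl

theorem approxMeanLimits_subset {H : Set ℝ} (hbd : Bornology.IsBounded H) (hi : H.Infinite)
    {L U : ℝ} (hLU : accPts H ⊆ Set.Icc L U) : approxMeanLimits H ⊆ Set.Icc L U := by
  rintro x ⟨Hn, hmono, hunion, hlim⟩
  have hcard := tendsto_card_atTop_of_monotone (monotone_nat_of_le_succ hmono) (hunion ▸ hi)
  have hnear : ∀ ε > 0, x ∈ Set.Icc (L - ε) (U + ε) := fun ε hε => by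
    have hT := finite_inter_of_disjoint_accPts hbd isOpen_Ioo.isClosed_compl
      (Set.disjoint_compl_left_iff_subset.2 (hLU.trans (Set.Icc_subset_Ioo
        (sub_lt_self L hε) (lt_add_of_pos_right U hε))))
    refine mem_Icc_of_tendsto_finsetMean hT.toFinset (fun n y hy hyT => ?_) hcard hlim
    have hyH : y ∈ H := hunion ▸ Set.mem_iUnion_of_mem n hy
    exact Set.Ioo_subset_Icc_self (by_contra fun h => hyT (hT.mem_toFinset.2 ⟨hyH, h⟩))
  exact ⟨le_of_forall_pos_le_add fun ε hε => by linarith [(hnear ε hε).1],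
    le_of_forall_pos_le_add fun ε hε => (hnear ε hε).2⟩

section Balancing

variable {α : Type*} [DecidableEq α] {H : Set α} {φ : α → ℝ} {K δ : ℝ}

/-- While the sum exceeds `δ * #G`, each fresh point with `φ ≤ δ / 2` lowers the excess by at
least `δ / 2`; as `K ≤ δ * #G`, the step that brings the sum below `δ * #G` cannot overshoot
below `-(δ * #G)`. -/
theorem exists_superset_abs_sum_le_of_neg_le_sum (hδ : 0 < δ) (hK : ∀ y ∈ H, -K ≤ φ y)
    (hfresh : ∀ G : Finset α, ↑G ⊆ H → ∃ c ∈ H, c ∉ G ∧ φ c ≤ δ / 2) (k : ℕ) :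
    ∀ G : Finset α, ↑G ⊆ H → K ≤ δ * #G → -(δ * #G) ≤ ∑ y ∈ G, φ y →
      ∑ y ∈ G, φ y - δ * #G ≤ k * (δ / 2) →
      ∃ G', G ⊆ G' ∧ ↑G' ⊆ H ∧ |∑ y ∈ G', φ y| ≤ δ * #G' := by
  induction k with
  | zero =>
    intro G hGH _ hlow hexcess
    exact ⟨G, subset_rfl, hGH, abs_le.2 ⟨hlow, by simpa using hexcess⟩⟩
  | succ k ih =>
    intro G hGH hKG hlow hexcess
    by_cases hdone : ∑ y ∈ G, φ y ≤ δ * #G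
    · exact ⟨G, subset_rfl, hGH, abs_le.2 ⟨hlow, hdone⟩⟩
    obtain ⟨c, hcH, hcG, hc⟩ := hfresh G hGH
    have hKc := hK c hcH
    have hsum : ∑ y ∈ insert c G, φ y = φ c + ∑ y ∈ G, φ y := Finset.sum_insert hcG
    have hcard : (#(insert c G) : ℝ) = #G + 1 := by
      rw [Finset.card_insert_of_notMem hcG, Nat.cast_succ]
    obtain ⟨G', hGG', hG'⟩ := ih (insert c G)
      ((Finset.coe_insert c G).trans_subset (Set.insert_subset hcH hGH))
      (by rw [hcard]; nlinarith) (by rw [hsum, hcard]; nlinarith)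
      (by rw [hsum, hcard]; push_cast at hexcess; linarith)
    exact ⟨G', (Finset.subset_insert c G).trans hGG', hG'⟩

theorem exists_superset_abs_sum_le (hδ : 0 < δ) (hK : ∀ y ∈ H, |φ y| ≤ K)
    (hfresh_le : ∀ G : Finset α, ↑G ⊆ H → ∃ c ∈ H, c ∉ G ∧ φ c ≤ δ / 2)
    (hfresh_ge : ∀ G : Finset α, ↑G ⊆ H → ∃ c ∈ H, c ∉ G ∧ -(δ / 2) ≤ φ c)
    {G : Finset α} (hGH : ↑G ⊆ H) (hKG : K ≤ δ * #G) :
    ∃ G', G ⊆ G' ∧ ↑G' ⊆ H ∧ |∑ y ∈ G', φ y| ≤ δ * #G' := by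
  obtain ⟨k, hk⟩ := exists_nat_ge (|∑ y ∈ G, φ y| / (δ / 2))
  have hexcess : ∀ ψ : α → ℝ, |∑ y ∈ G, ψ y| = |∑ y ∈ G, φ y| →
      ∑ y ∈ G, ψ y - δ * #G ≤ k * (δ / 2) := fun ψ hψ => by
    rw [div_le_iff₀ (by positivity)] at hk
    have := le_abs_self (∑ y ∈ G, ψ y)
    nlinarith [hψ]
  by_cases hlow : -(δ * #G) ≤ ∑ y ∈ G, φ y
  · exact exists_superset_abs_sum_le_of_neg_le_sum hδ (fun y hy => (abs_le.1 (hK y hy)).1)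
      hfresh_le k G hGH hKG hlow (hexcess φ rfl)
  · obtain ⟨G', hGG', hG'H, hG'⟩ := exists_superset_abs_sum_le_of_neg_le_sum
      (φ := fun y => -φ y) hδ (fun y hy => neg_le_neg (abs_le.1 (hK y hy)).2)
      (fun G hG => (hfresh_ge G hG).imp fun c ⟨hcH, hcG, hc⟩ => ⟨hcH, hcG, by linarith⟩) k
      G hGH hKG (by rw [Finset.sum_neg_distrib]; linarith [show 0 ≤ δ * #G by positivity])
      (hexcess _ (by rw [Finset.sum_neg_distrib, abs_neg]))
    exact ⟨G', hGG', hG'H, by rwa [Finset.sum_neg_distrib, abs_neg] at hG'⟩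

end Balancing

theorem exists_mem_notMem_abs_sub_lt_of_mem_accPts {H : Set ℝ} {p : ℝ} (hp : p ∈ accPts H)
    (G : Finset ℝ) {ε : ℝ} (hε : 0 < ε) : ∃ c ∈ H, c ∉ G ∧ |c - p| < ε := by
  have hacc : AccPt p (𝓟 (H ∩ Metric.ball p ε)) := accPt_iff_frequently_nhdsNE.2 <|
    (accPt_iff_frequently_nhdsNE.1 hp).and_eventually
      (eventually_nhdsWithin_of_eventually_nhds (Metric.ball_mem_nhds p hε))
  obtain ⟨c, ⟨hcH, hcp⟩, hcG⟩ := ((Set.Infinite.of_accPt hacc).sdiff G.finite_toSet).nonempty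
  exact ⟨c, hcH, hcG, by rwa [Metric.mem_ball, Real.dist_eq] at hcp⟩

theorem exists_superset_abs_finsetMean_sub_le {H : Set ℝ} (hbd : Bornology.IsBounded H)
    (hi : H.Infinite) {a b x : ℝ} (ha : a ∈ accPts H) (hb : b ∈ accPts H) (hax : a ≤ x)
    (hxb : x ≤ b) {G : Finset ℝ} (hGH : ↑G ⊆ H) {δ : ℝ} (hδ : 0 < δ) :
    ∃ G', G ⊆ G' ∧ ↑G' ⊆ H ∧ |finsetMean G' - x| ≤ δ := by
  obtain ⟨K, hK⟩ := (Metric.isBounded_iff_subset_closedBall x).1 hbd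
  obtain ⟨S, hSH, hS⟩ := hi.exists_subset_card_eq (⌈K / δ⌉₊ + 1)
  have hG₀H : ↑(G ∪ S) ⊆ H := by rw [Finset.coe_union]; exact Set.union_subset hGH hSH
  have hcard : ⌈K / δ⌉₊ + 1 ≤ #(G ∪ S) := hS ▸ Finset.card_le_card Finset.subset_union_right
  have hKG₀ : K ≤ δ * #(G ∪ S) := by
    rw [← div_le_iff₀' hδ]
    linarith [Nat.le_ceil (K / δ), (Nat.cast_le (α := ℝ)).2 hcard, Nat.cast_succ (R := ℝ) ⌈K / δ⌉₊]
  obtain ⟨G', hG₀G', hG'H, hG'⟩ := exists_superset_abs_sum_le (φ := (· - x)) hδ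
    (fun y hy => by simpa [Real.dist_eq] using hK hy)
    (fun G _ => (exists_mem_notMem_abs_sub_lt_of_mem_accPts ha G (half_pos hδ)).imp
      fun c ⟨hcH, hcG, hc⟩ => ⟨hcH, hcG, by linarith [(abs_lt.1 hc).2]⟩)
    (fun G _ => (exists_mem_notMem_abs_sub_lt_of_mem_accPts hb G (half_pos hδ)).imp
      fun c ⟨hcH, hcG, hc⟩ => ⟨hcH, hcG, by linarith [(abs_lt.1 hc).1]⟩)
    hG₀H hKG₀
  have hG'ne : G'.Nonempty := (Finset.card_pos.1 (by omega)).mono hG₀G'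
  refine ⟨G', Finset.subset_union_left.trans hG₀G', hG'H, ?_⟩
  rw [finsetMean_sub hG'ne, abs_div, Nat.abs_cast, div_le_iff₀ (by exact_mod_cast hG'ne.card_pos)]
  exact hG'

theorem mem_approxMeanLimits_of_forall_exists {H : Set ℝ} (hc : H.Countable) (hne : H.Nonempty)
    {x : ℝ} (hext : ∀ G : Finset ℝ, ↑G ⊆ H → ∀ δ > 0,
      ∃ G', G ⊆ G' ∧ ↑G' ⊆ H ∧ |finsetMean G' - x| ≤ δ) : x ∈ approxMeanLimits H := by
  obtain ⟨f, rfl⟩ := hc.exists_eq_range hne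
  -- The implication makes the step total, so that `choose` yields a plain recursion step.
  have hstep : ∀ (n : ℕ) (G : Finset ℝ), ∃ G', ↑G ⊆ Set.range f →
      insert (f n) G ⊆ G' ∧ ↑G' ⊆ Set.range f ∧ |finsetMean G' - x| ≤ 1 / (n + 1) := by
    intro n G
    by_cases hG : ↑G ⊆ Set.range f
    · obtain ⟨G', hG'⟩ := hext (insert (f n) G)
        ((Finset.coe_insert _ _).trans_subset (Set.insert_subset (Set.mem_range_self n) hG))
        (1 / (n + 1)) Nat.one_div_pos_of_nat
      exact ⟨G', fun _ => hG'⟩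
    · exact ⟨∅, fun h => absurd h hG⟩
  choose g hg using hstep
  let F : ℕ → Finset ℝ := fun n => Nat.rec (motive := fun _ => Finset ℝ) ∅ g n
  have hFf : ∀ n, (F n : Set ℝ) ⊆ Set.range f := by
    intro n
    induction n with
    | zero => simp [F]
    | succ n ih => exact (hg n (F n) ih).2.1
  refine ⟨F, fun n => (Finset.subset_insert _ _).trans (hg n _ (hFf n)).1, ?_, ?_⟩
  · refine (Set.iUnion_subset hFf).antisymm ?_
    rintro _ ⟨n, rfl⟩
    exact Set.mem_iUnion_of_mem (n + 1) ((hg n _ (hFf n)).1 (Finset.mem_insert_self _ _))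
  · refine (tendsto_add_atTop_iff_nat 1).1 (tendsto_iff_norm_sub_tendsto_zero.2 ?_)
    exact squeeze_zero (fun _ => norm_nonneg _) (fun n => (hg n _ (hFf n)).2.2)
      tendsto_one_div_add_atTop_nhds_zero_nat

theorem Icc_subset_approxMeanLimits {H : Set ℝ} (hbd : Bornology.IsBounded H)
    (hc : H.Countable) (hi : H.Infinite) {a b : ℝ} (ha : a ∈ accPts H) (hb : b ∈ accPts H) :
    Set.Icc a b ⊆ approxMeanLimits H := fun _ ⟨hax, hxb⟩ =>
  mem_approxMeanLimits_of_forall_exists hc hi.nonempty fun _ hGH _ hδ =>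
    exists_superset_abs_finsetMean_sub_le hbd hi ha hb hax hxb hGH hδ

/-- `MS^a(H) = [liminf H, limsup H]` for a bounded countably
infinite set `H`. -/
theorem msa_eq_Icc (H : Set ℝ) (hbd : Bornology.IsBounded H)
    (hc : H.Countable) (hi : H.Infinite) :
    {x : ℝ | ∃ Hn : ℕ → Finset ℝ,
        (∀ n, Hn n ⊆ Hn (n + 1)) ∧ (⋃ n, (Hn n : Set ℝ)) = H ∧
        Tendsto (fun n => finsetMean (Hn n)) atTop (𝓝 x)} =
      Set.Icc (sInf (accPts H)) (sSup (accPts H)) := by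
  have hne : (accPts H).Nonempty := by
    obtain ⟨z, -, hz⟩ := hi.exists_accPt_of_subset_isCompact hbd.isCompact_closure subset_closure
    exact ⟨z, hz⟩
  have hacc_bdd : Bornology.IsBounded (accPts H) :=
    hbd.closure.subset (derivedSet_subset_closure H)
  have hclosed : IsClosed (accPts H) := isClosed_derivedSet H
  show approxMeanLimits H = _
  exact (approxMeanLimits_subset hbd hi fun z hz =>
      ⟨csInf_le hacc_bdd.bddBelow hz, le_csSup hacc_bdd.bddAbove hz⟩).antisymm
    (Icc_subset_approxMeanLimits hbd hc hi (hclosed.csInf_mem hne hacc_bdd.bddBelow)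
      (hclosed.csSup_mem hne hacc_bdd.bddAbove))
end

section
/- Let H₁ = {0} ∪ {1/n : n ∈ ℕ} ∪ {1} ∪ {1 + 1/n : n ∈ ℕ}. Then for every function K, defined on all bounded infinite subsets of ℝ with real values and satisfying strong internality (liminf H ≤ K(H) ≤ limsup H for every bounded infinite H ⊆ ℝ), there exists a sequence (L_k) of bounded infinite subsets of ℝ converging to H₁ in the Hausdorff metric such that K(L_{2k}) = 1 and K(L_{2k+1}) = 0 for all k; in particular K is not continuous at H₁ with respect to the Hausdorff metric. -/
open Filter Topology

/-- The set `H₁ = {0} ∪ {1/n : n ∈ ℕ} ∪ {1} ∪ {1 + 1/n : n ∈ ℕ}`. -/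
noncomputable def Hone : Set ℝ :=
  {0, 1} ∪ Set.range (fun n : ℕ => (1 : ℝ) / (n + 1)) ∪
    Set.range (fun n : ℕ => 1 + (1 : ℝ) / (n + 1))

open Set Metric

/-! Strong internality forces `K H = c` whenever `c` is the only accumulation point of `H`.
Deleting from `H₁` the points `1/n` with `n > m` leaves a set whose only accumulation point is
`1`; deleting the points `1 + 1/n` with `n > m` leaves one whose only accumulation point is `0`.
Both are Hausdorff-close to `H₁`, because every deleted point lies within `1/m` of `0`, resp. `1`,
which remain. Alternating the two kinds of sets gives the sequence. -/

section DerivedSet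

variable {X : Type*} [TopologicalSpace X]

theorem derivedSet_eq_empty_of_finite [T1Space X] {A : Set X} (hA : A.Finite) :
    derivedSet A = ∅ :=
  eq_empty_of_forall_notMem fun _ hx => Set.Infinite.of_accPt hx hA

theorem mem_derivedSet_range_of_tendsto {u : ℕ → X} {c : X} (hu : Tendsto u atTop (𝓝 c))
    (hne : ∀ n, u n ≠ c) : c ∈ derivedSet (range u) := by
  rw [mem_derivedSet, accPt_principal_iff_clusterPt, ← mem_closure_iff_clusterPt]
  exact mem_closure_of_tendsto hu (Eventually.of_forall fun n => ⟨mem_range_self n, hne n⟩)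

theorem derivedSet_range_subset_of_tendsto [T2Space X] {u : ℕ → X} {c : X}
    (hu : Tendsto u atTop (𝓝 c)) : derivedSet (range u) ⊆ {c} := by
  intro x hx
  by_contra hxc
  obtain ⟨U, V, hU, hV, hUV⟩ := t2_separation_nhds hxc
  obtain ⟨N, hN⟩ := eventually_atTop.1 (hu hV)
  have hsplit : range u ⊆ u '' Iio N ∪ V := by
    rintro _ ⟨n, rfl⟩
    rcases lt_or_ge n N with hn | hn
    · exact Or.inl (mem_image_of_mem u hn)
    · exact Or.inr (hN n hn)
  have hxV : x ∈ closure V := by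
    have := derivedSet_mono _ _ hsplit hx
    rw [derivedSet_union, derivedSet_eq_empty_of_finite ((finite_Iio N).image u),
      empty_union] at this
    exact derivedSet_subset_closure V this
  obtain ⟨y, hyU, hyV⟩ := mem_closure_iff_nhds.1 hxV U hU
  exact disjoint_left.1 hUV hyU hyV

theorem derivedSet_union_range_of_tendsto [T2Space X] {F : Set X} {u : ℕ → X} {c : X}
    (hF : F.Finite) (hu : Tendsto u atTop (𝓝 c)) (hne : ∀ n, u n ≠ c) :
    derivedSet (F ∪ range u) = {c} := by
  rw [derivedSet_union, derivedSet_eq_empty_of_finite hF, empty_union]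
  exact (derivedSet_range_subset_of_tendsto hu).antisymm
    (singleton_subset_iff.2 (mem_derivedSet_range_of_tendsto hu hne))

end DerivedSet

theorem tendsto_hausdorffDist_union_image_Iic {α : Type*} [PseudoMetricSpace α]
    {S T : Set α} {u : ℕ → α} {c : α} (hc : c ∈ S) (hu : Tendsto u atTop (𝓝 c)) :
    Tendsto (fun m => hausdorffDist (S ∪ u '' Iic m ∪ T) (S ∪ range u ∪ T)) atTop (𝓝 0) := by
  rw [Metric.tendsto_atTop]
  intro ε hε
  obtain ⟨N, hN⟩ := Metric.tendsto_atTop.1 hu (ε / 2) (half_pos hε)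
  refine ⟨N, fun m hm => ?_⟩
  rw [Real.dist_eq, sub_zero, abs_of_nonneg hausdorffDist_nonneg]
  have hε₂ : 0 ≤ ε / 2 := (half_pos hε).le
  refine (hausdorffDist_le_of_mem_dist hε₂ ?_ ?_).trans_lt (half_lt_self hε)
  · intro x hx
    refine ⟨x, ?_, by rwa [dist_self]⟩
    exact union_subset_union_left T (union_subset_union_right S (image_subset_range u _)) hx
  · rintro x ((hxS | ⟨n, rfl⟩) | hxT)
    · exact ⟨x, Or.inl (Or.inl hxS), by rwa [dist_self]⟩
    · rcases le_or_gt n m with hn | hn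
      · exact ⟨u n, Or.inl (Or.inr ⟨n, hn, rfl⟩), by rwa [dist_self]⟩
      · exact ⟨c, Or.inl (Or.inl hc), (hN n (by omega)).le⟩
    · exact ⟨x, Or.inr hxT, by rwa [dist_self]⟩

def IsStronglyInternal (K : Set ℝ → ℝ) : Prop :=
  ∀ H : Set ℝ, Bornology.IsBounded H → H.Infinite →
    sInf (accPts H) ≤ K H ∧ K H ≤ sSup (accPts H)

theorem accPts_eq_derivedSet (H : Set ℝ) : accPts H = derivedSet H := rfl

section UnionRange

variable {F : Set ℝ} {u : ℕ → ℝ} {c : ℝ}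

theorem isBounded_union_range_of_tendsto (hF : F.Finite) (hu : Tendsto u atTop (𝓝 c)) :
    Bornology.IsBounded (F ∪ range u) :=
  hF.isBounded.union (isBounded_range_of_tendsto u hu)

theorem infinite_union_range_of_tendsto (hu : Tendsto u atTop (𝓝 c)) (hne : ∀ n, u n ≠ c) :
    (F ∪ range u).Infinite :=
  (Set.Infinite.of_accPt (mem_derivedSet_range_of_tendsto hu hne)).mono subset_union_right

theorem IsStronglyInternal.apply_union_range {K : Set ℝ → ℝ} (hK : IsStronglyInternal K)
    (hF : F.Finite) (hu : Tendsto u atTop (𝓝 c)) (hne : ∀ n, u n ≠ c) :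
    K (F ∪ range u) = c := by
  have hacc : accPts (F ∪ range u) = {c} := by
    rw [accPts_eq_derivedSet, derivedSet_union_range_of_tendsto hF hu hne]
  obtain ⟨hle, hge⟩ :=
    hK _ (isBounded_union_range_of_tendsto hF hu) (infinite_union_range_of_tendsto hu hne)
  rw [hacc, csInf_singleton] at hle
  rw [hacc, csSup_singleton] at hge
  exact hge.antisymm hle

end UnionRange

/-- no strongly internal mean on the bounded infinite subsets of `ℝ`
can be continuous at `H₁` with respect to the Hausdorff metric: there is a sequence
of bounded infinite sets converging to `H₁` in Hausdorff distance whose means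
alternate between `1` and `0`. -/
theorem no_strongly_internal_mean_continuous (K : Set ℝ → ℝ)
    (hK : ∀ H : Set ℝ, Bornology.IsBounded H → H.Infinite →
      sInf (accPts H) ≤ K H ∧ K H ≤ sSup (accPts H)) :
    ∃ L : ℕ → Set ℝ,
      (∀ k, Bornology.IsBounded (L k) ∧ (L k).Infinite) ∧
      Tendsto (fun k => Metric.hausdorffDist (L k) Hone) atTop (𝓝 0) ∧
      (∀ k, K (L (2 * k)) = 1 ∧ K (L (2 * k + 1)) = 0) := by
  set w₀ : ℕ → ℝ := fun n => 1 / (n + 1)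
  set w₁ : ℕ → ℝ := fun n => 1 + 1 / (n + 1)
  have hw₀ : Tendsto w₀ atTop (𝓝 0) := tendsto_one_div_add_atTop_nhds_zero_nat
  have hw₁ : Tendsto w₁ atTop (𝓝 1) := by simpa using hw₀.const_add 1
  have hw₀ne : ∀ n, w₀ n ≠ 0 := fun n => by positivity
  have hw₁ne : ∀ n, w₁ n ≠ 1 := fun n => add_ne_left.2 (hw₀ne n)
  have hfin : ∀ (w : ℕ → ℝ) (m : ℕ), ({0, 1} ∪ w '' Iic m).Finite := fun w m =>
    (toFinite _).union ((finite_Iic m).image w)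
  set E : ℕ → Set ℝ := fun m => {0, 1} ∪ w₀ '' Iic m ∪ range w₁
  set O : ℕ → Set ℝ := fun m => {0, 1} ∪ w₁ '' Iic m ∪ range w₀
  have hEdist : Tendsto (fun m => hausdorffDist (E m) Hone) atTop (𝓝 0) :=
    tendsto_hausdorffDist_union_image_Iic (by simp) hw₀
  have hOdist : Tendsto (fun m => hausdorffDist (O m) Hone) atTop (𝓝 0) := by
    rw [show Hone = {0, 1} ∪ range w₁ ∪ range w₀ from union_right_comm _ _ _]
    exact tendsto_hausdorffDist_union_image_Iic (by simp) hw₁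
  refine ⟨fun k => if Even k then E k else O k, fun k => ?_, ?_, fun k => ?_⟩
  · dsimp only
    split_ifs
    · exact ⟨isBounded_union_range_of_tendsto (hfin _ _) hw₁,
        infinite_union_range_of_tendsto hw₁ hw₁ne⟩
    · exact ⟨isBounded_union_range_of_tendsto (hfin _ _) hw₀,
        infinite_union_range_of_tendsto hw₀ hw₀ne⟩
  · refine squeeze_zero (fun _ => hausdorffDist_nonneg) (fun k => ?_)
      (by simpa using hEdist.add hOdist)
    dsimp only
    split_ifs
    · exact le_add_of_nonneg_right hausdorffDist_nonneg
    · exact le_add_of_nonneg_left hausdorffDist_nonneg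
  · simp only [even_two_mul, Nat.not_even_two_mul_add_one, if_true, if_false]
    exact ⟨IsStronglyInternal.apply_union_range hK (hfin _ _) hw₁ hw₁ne,
      IsStronglyInternal.apply_union_range hK (hfin _ _) hw₀ hw₀ne⟩
end

section
/- Let H ⊆ ℝ be finite and nonempty. Then LAvg(H) exists and LAvg(H) = A(H), the arithmetic mean of the elements of H. -/
open Filter Topology MeasureTheory

/-- `Avg` of a set of reals: the integral of the identity divided by the measure. -/
noncomputable def setAvg (K : Set ℝ) : ℝ := (∫ x in K, x) / (volume K).toReal

/-- for a finite nonempty `H ⊆ ℝ`, `LAvg(H)` exists and equals the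
arithmetic mean of the elements of `H`. -/
theorem lavg_of_finite (H : Set ℝ) (hf : H.Finite) (hne : H.Nonempty) :
    Tendsto (fun δ : ℝ => setAvg (Metric.thickening δ H)) (𝓝[>] 0)
      (𝓝 ((∑ x ∈ hf.toFinset, x) / (hf.toFinset.card : ℝ))) := by
  classical
  set F := hf.toFinset with hFdef
  have hFne : F.Nonempty := by
    obtain ⟨x, hx⟩ := hne
    exact ⟨x, hf.mem_toFinset.2 hx⟩
  -- a positive separation bound
  obtain ⟨δ₀, hδ₀pos, hδ₀⟩ :
      ∃ δ₀ > 0, ∀ x ∈ F, ∀ y ∈ F, x ≠ y → 2 * δ₀ ≤ |x - y| := by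
    set P := (F ×ˢ F).filter fun p : ℝ × ℝ => p.1 ≠ p.2 with hP
    by_cases hPne : P.Nonempty
    · set m := (P.image fun p => |p.1 - p.2|).min' (hPne.image _) with hm
      have hmpos : 0 < m := by
        have hmem := Finset.min'_mem (P.image fun p => |p.1 - p.2|) (hPne.image _)
        rw [Finset.mem_image] at hmem
        obtain ⟨p, hp, hpe⟩ := hmem
        rw [hP, Finset.mem_filter] at hp
        rw [← hm] at hpe
        rw [← hpe]
        exact abs_pos.2 (sub_ne_zero.2 hp.2)
      refine ⟨m / 2, by linarith, fun x hx y hy hxy => ?_⟩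
      have hmem : |x - y| ∈ P.image fun p => |p.1 - p.2| := by
        refine Finset.mem_image.2 ⟨(x, y), ?_, rfl⟩
        rw [hP, Finset.mem_filter]
        exact ⟨Finset.mem_product.2 ⟨hx, hy⟩, hxy⟩
      have := Finset.min'_le _ _ hmem
      linarith
    · refine ⟨1, one_pos, fun x hx y hy hxy => absurd ?_ hPne⟩
      refine ⟨(x, y), ?_⟩
      rw [hP, Finset.mem_filter]
      exact ⟨Finset.mem_product.2 ⟨hx, hy⟩, hxy⟩
  have key : ∀ δ ∈ Set.Ioo (0 : ℝ) δ₀,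
      setAvg (Metric.thickening δ H) = (∑ x ∈ F, x) / (F.card : ℝ) := by
    rintro δ ⟨hδ0, hδlt⟩
    have hUnion : Metric.thickening δ H = ⋃ x ∈ F, Set.Ioo (x - δ) (x + δ) := by
      rw [Metric.thickening_eq_biUnion_ball]
      ext y
      simp [Real.ball_eq_Ioo, hFdef, Set.Finite.mem_toFinset]
    have hdisj : (↑F : Set ℝ).Pairwise
        (Function.onFun Disjoint fun x => Set.Ioo (x - δ) (x + δ)) := by
      intro x hx y hy hxy
      have h2δ : 2 * δ ≤ |x - y| :=
        le_trans (by linarith) (hδ₀ x (by simpa using hx) y (by simpa using hy) hxy)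
      refine Set.Ioo_disjoint_Ioo.2 ?_
      rcases le_total x y with hle | hle
      · rw [abs_sub_comm, abs_of_nonneg (by linarith)] at h2δ
        exact le_trans (min_le_left _ _) (le_trans (by linarith) (le_max_right _ _))
      · rw [abs_of_nonneg (by linarith)] at h2δ
        exact le_trans (min_le_right _ _) (le_trans (by linarith) (le_max_left _ _))
    have hvol : (volume (Metric.thickening δ H)).toReal = (F.card : ℝ) * (2 * δ) := by
      rw [hUnion, measure_biUnion_finset hdisj (fun i _ => measurableSet_Ioo)]
      have hterm : ∀ x ∈ F, volume (Set.Ioo (x - δ) (x + δ)) = ENNReal.ofReal (2 * δ) := by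
        intro x _
        rw [Real.volume_Ioo]
        congr 1
        ring
      rw [Finset.sum_congr rfl hterm, Finset.sum_const, nsmul_eq_mul, ENNReal.toReal_mul,
        ENNReal.toReal_ofReal (by linarith : (0:ℝ) ≤ 2 * δ)]
      simp
    have hint : ∫ x in Metric.thickening δ H, x = 2 * δ * ∑ x ∈ F, x := by
      rw [hUnion, integral_biUnion_finset (f := fun x : ℝ => x) F (fun i _ => measurableSet_Ioo) hdisj
        (fun i _ => (intervalIntegrable_iff_integrableOn_Ioo_of_le (by linarith)).1
          (continuous_id.intervalIntegrable _ _))]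
      have hone : ∀ x ∈ F, ∫ t in Set.Ioo (x - δ) (x + δ), t = 2 * δ * x := by
        intro x _
        rw [← MeasureTheory.integral_Ioc_eq_integral_Ioo,
          ← intervalIntegral.integral_of_le (by linarith), integral_id]
        ring
      rw [Finset.sum_congr rfl hone, ← Finset.mul_sum]
    rw [setAvg, hint, hvol]
    have hcard : (F.card : ℝ) ≠ 0 := Nat.cast_ne_zero.2 hFne.card_ne_zero
    field_simp
  have hmem : Set.Ioo (0 : ℝ) δ₀ ∈ 𝓝[>] (0 : ℝ) :=
    Ioo_mem_nhdsGT_of_mem ⟨le_refl 0, hδ₀pos⟩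
  exact Tendsto.congr' (eventually_of_mem hmem fun δ hδ => (key δ hδ).symm) tendsto_const_nhds
end

section
/- Let H ⊆ ℝ be bounded and infinite with exactly one accumulation point, say H' = {h}. Then LAvg(H) exists and LAvg(H) = h. -/
/-!
Fix `ε > 0`. Only finitely many points of `H`, say `n`, lie outside `ball h ε`, so the part of the
`δ`-thickening of `H` coming from them has measure at most `2nδ`, while every point of the rest of
the thickening is within `ε + δ` of `h`. Since `H` is infinite, for small `δ` it contains `N`
points whose `δ`-balls are disjoint, so the whole thickening has measure at least `2Nδ` with `N`
arbitrarily large. Hence the far part has negligible relative measure and the average lies within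
about `ε` of `h`.
-/

open Filter Topology MeasureTheory

open Metric Bornology Set

theorem Continuous.integrableOn_of_isBounded {X E : Type*} [PseudoMetricSpace X] [ProperSpace X]
    [MeasurableSpace X] [OpensMeasurableSpace X] [NormedAddCommGroup E] {μ : Measure X}
    [IsFiniteMeasureOnCompacts μ] {f : X → E} (hf : Continuous f) {K : Set X}
    (hK : IsBounded K) : IntegrableOn f K μ :=
  (hf.continuousOn.integrableOn_compact' hK.isCompact_closure
    isClosed_closure.measurableSet).mono_set subset_closure

theorem volume_real_mul_setAvg_sub {K : Set ℝ} (hK : IsBounded K) (c : ℝ) :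
    volume.real K * (setAvg K - c) = ∫ x in K, (x - c) := by
  have hfin : volume K ≠ ⊤ := hK.measure_lt_top.ne
  rw [integral_sub (continuous_id'.integrableOn_of_isBounded hK) (integrableOn_const hfin),
    setIntegral_const, smul_eq_mul, setAvg, ← measureReal_def]
  rcases eq_or_ne (volume.real K) 0 with h0 | h0
  · have hK0 : volume.restrict K = 0 :=
      Measure.restrict_eq_zero.2 ((measureReal_eq_zero_iff hfin).1 h0)
    simp [h0, hK0]
  · field_simp

theorem norm_setIntegral_le_of_norm_le_piecewise_const {α E : Type*} [MeasurableSpace α]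
    [NormedAddCommGroup E] [NormedSpace ℝ E] {μ : Measure α} {f : α → E} {K B : Set α}
    {a b : ℝ} (hK : μ K < ⊤) (hB : MeasurableSet B) (hBK : B ⊆ K) (hf : IntegrableOn f K μ)
    (ha₀ : 0 ≤ a) (ha : ∀ x ∈ K \ B, ‖f x‖ ≤ a) (hb : ∀ x ∈ B, ‖f x‖ ≤ b) :
    ‖∫ x in K, f x ∂μ‖ ≤ a * μ.real K + b * μ.real B := by
  calc ‖∫ x in K, f x ∂μ‖ = ‖(∫ x in K \ B, f x ∂μ) + ∫ x in B, f x ∂μ‖ := by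
        rw [← setIntegral_union disjoint_sdiff_left hB (hf.mono_set sdiff_subset)
          (hf.mono_set hBK), sdiff_union_of_subset hBK]
    _ ≤ ‖∫ x in K \ B, f x ∂μ‖ + ‖∫ x in B, f x ∂μ‖ := norm_add_le _ _
    _ ≤ a * μ.real (K \ B) + b * μ.real B :=
        add_le_add
          (norm_setIntegral_le_of_norm_le_const ((measure_mono sdiff_subset).trans_lt hK) ha)
          (norm_setIntegral_le_of_norm_le_const ((measure_mono hBK).trans_lt hK) hb)
    _ ≤ a * μ.real K + b * μ.real B := by
        gcongr
        · exact hK.ne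
        · exact sdiff_subset

theorem abs_setAvg_thickening_sub_le {H : Set ℝ} {h R ε δ : ℝ} (hR : H ⊆ closedBall h R)
    (hne : H.Nonempty) (hε : 0 ≤ ε) (hδ : 0 < δ) :
    |setAvg (thickening δ H) - h| ≤
      ε + δ + (R + δ) * (volume.real (thickening δ (H \ ball h ε)) /
        volume.real (thickening δ H)) := by
  set S := thickening δ H
  set B := thickening δ (H \ ball h ε)
  have hS : IsBounded S := (isBounded_closedBall.subset hR).thickening
  have hSpos : 0 < volume.real S := by
    obtain ⟨x, hx⟩ := hne
    exact ENNReal.toReal_pos ((measure_ball_pos volume x hδ).trans_le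
      (measure_mono (ball_subset_thickening hx δ))).ne' hS.measure_lt_top.ne
  have hkey : volume.real S * |setAvg S - h| ≤
      (ε + δ) * volume.real S + (R + δ) * volume.real B := by
    have hnorm : volume.real S * |setAvg S - h| = ‖∫ x in S, (x - h)‖ := by
      rw [← volume_real_mul_setAvg_sub hS, Real.norm_eq_abs, abs_mul, abs_of_pos hSpos]
    rw [hnorm]
    refine norm_setIntegral_le_of_norm_le_piecewise_const hS.measure_lt_top
      isOpen_thickening.measurableSet (thickening_subset_of_subset δ sdiff_subset)
      ((continuous_id.sub continuous_const).integrableOn_of_isBounded hS) (by positivity) ?_ ?_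
    · rintro x ⟨hxS, hxB⟩
      obtain ⟨y, hyH, hxy⟩ := mem_thickening_iff.1 hxS
      have hyh : y ∈ ball h ε := by
        by_contra hy
        exact hxB (mem_thickening_iff.2 ⟨y, ⟨hyH, hy⟩, hxy⟩)
      rw [Real.norm_eq_abs, ← Real.dist_eq]
      linarith [dist_triangle x y h, mem_ball.1 hyh]
    · intro x hxB
      obtain ⟨y, ⟨hyH, -⟩, hxy⟩ := mem_thickening_iff.1 hxB
      rw [Real.norm_eq_abs, ← Real.dist_eq]
      linarith [dist_triangle x y h, mem_closedBall.1 (hR hyH)]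
  refine le_of_mul_le_mul_left (hkey.trans_eq ?_) hSpos
  field_simp

theorem volume_thickening_finset_le (T : Finset ℝ) (δ : ℝ) :
    volume (thickening δ (T : Set ℝ)) ≤ T.card * ENNReal.ofReal (2 * δ) := by
  rw [thickening_eq_biUnion_ball]
  exact (measure_biUnion_finset_le T _).trans (by simp [Real.volume_ball])

theorem eventually_volume_thickening_finset_eq (T : Finset ℝ) :
    ∀ᶠ δ in 𝓝[>] 0,
      volume (thickening δ (T : Set ℝ)) = T.card * ENNReal.ofReal (2 * δ) := by
  have hsep : ∀ᶠ δ in 𝓝[>] (0 : ℝ), ∀ p ∈ T.offDiag, δ < dist p.1 p.2 / 2 :=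
    (eventually_all_finset _).2 fun p hp => eventually_nhdsWithin_of_eventually_nhds <|
      eventually_lt_nhds (half_pos (dist_pos.2 (Finset.mem_offDiag.1 hp).2.2))
  filter_upwards [hsep] with δ hδ
  have hdisj : (T : Set ℝ).PairwiseDisjoint (ball · δ) := fun x hx y hy hxy =>
    ball_disjoint_ball (by linarith [hδ (x, y) (Finset.mem_offDiag.2 ⟨hx, hy, hxy⟩)])
  rw [thickening_eq_biUnion_ball, Finset.set_biUnion_coe,
    measure_biUnion_finset hdisj fun _ _ => measurableSet_ball]
  simp [Real.volume_ball]

theorem tendsto_volume_real_thickening_div_of_finite {F H : Set ℝ} (hF : F.Finite)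
    (hH : H.Infinite) (hbd : IsBounded H) :
    Tendsto (fun δ => volume.real (thickening δ F) / volume.real (thickening δ H))
      (𝓝[>] 0) (𝓝 0) := by
  lift F to Finset ℝ using hF
  refine tendsto_order.2 ⟨fun a ha => Eventually.of_forall fun δ => ha.trans_le (by positivity),
    fun a ha => ?_⟩
  obtain ⟨N, hN⟩ := exists_nat_gt (F.card / a)
  obtain ⟨T, hTH, rfl⟩ := hH.exists_subset_card_eq N
  filter_upwards [eventually_volume_thickening_finset_eq T, self_mem_nhdsWithin]
    with δ hT (hδ : 0 < δ)
  have hlow : T.card * (2 * δ) ≤ volume.real (thickening δ H) := by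
    have := ENNReal.toReal_mono hbd.thickening.measure_lt_top.ne
      ((hT.symm.trans_le (measure_mono (thickening_subset_of_subset δ hTH))))
    simpa [measureReal_def, ENNReal.toReal_mul, hδ.le] using this
  have hup : volume.real (thickening δ (F : Set ℝ)) ≤ F.card * (2 * δ) := by
    have := ENNReal.toReal_mono (by finiteness) (volume_thickening_finset_le F δ)
    simpa [measureReal_def, ENNReal.toReal_mul, hδ.le] using this
  have hFT : (F.card : ℝ) < a * T.card := by
    rw [div_lt_iff₀ ha] at hN
    linarith
  have hT₀ : (0 : ℝ) < T.card := pos_of_mul_pos_right (F.card.cast_nonneg.trans_lt hFT) ha.le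
  rw [div_lt_iff₀ ((by positivity : (0 : ℝ) < T.card * (2 * δ)).trans_le hlow)]
  calc volume.real (thickening δ (F : Set ℝ)) ≤ F.card * (2 * δ) := hup
    _ < a * T.card * (2 * δ) := by gcongr
    _ ≤ a * volume.real (thickening δ H) := by rw [mul_assoc]; gcongr

theorem finite_diff_ball_of_accPts_subset {H : Set ℝ} {h ε : ℝ} (hbd : IsBounded H)
    (hacc : accPts H ⊆ {h}) (hε : 0 < ε) : (H \ ball h ε).Finite := by
  by_contra hinf
  obtain ⟨x, -, hx⟩ := Set.Infinite.exists_accPt_of_subset_isCompact hinf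
    hbd.isCompact_closure (sdiff_subset.trans subset_closure)
  obtain rfl : x = h := hacc (hx.mono (principal_mono.2 sdiff_subset))
  obtain ⟨y, ⟨hyball, -, hyfar⟩, -⟩ := accPt_iff_nhds.1 hx _ (ball_mem_nhds x hε)
  exact hyfar hyball

/-- if a bounded infinite `H ⊆ ℝ` has exactly one accumulation
point `h`, then `LAvg(H)` exists and equals `h`. -/
theorem lavg_of_single_accPt (H : Set ℝ) (hbd : Bornology.IsBounded H)
    (hi : H.Infinite) (h : ℝ) (hacc : accPts H = {h}) :
    Tendsto (fun δ : ℝ => setAvg (Metric.thickening δ H)) (𝓝[>] 0) (𝓝 h) := by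
  obtain ⟨R, -, hR⟩ := hbd.subset_closedBall_lt 0 h
  refine Metric.tendsto_nhds.2 fun ε hε => ?_
  have hratio := tendsto_volume_real_thickening_div_of_finite
    (finite_diff_ball_of_accPts_subset hbd hacc.le (half_pos hε)) hi hbd
  have hid : Tendsto (fun δ : ℝ => δ) (𝓝[>] 0) (𝓝 0) :=
    tendsto_nhdsWithin_of_tendsto_nhds tendsto_id
  have hbound := ((tendsto_const_nhds (x := ε / 2)).add hid).add
    (((tendsto_const_nhds (x := R)).add hid).mul hratio)
  simp only [add_zero, mul_zero] at hbound
  filter_upwards [hbound.eventually (gt_mem_nhds (half_lt_self hε)), self_mem_nhdsWithin]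
    with δ hlt (hδ : 0 < δ)
  rw [Real.dist_eq]
  exact (abs_setAvg_thickening_sub_le hR hi.nonempty (half_pos hε).le hδ).trans_lt hlt
end

section
/- Let H = H₁ ∪ H₂ where H₁, H₂ ⊆ ℝ are disjoint, H₁ is bounded and nonempty with λ(cl(H₁)) > 0, and H₂ is compact with λ(H₂) = 0. If LAvg(H₁) exists, then LAvg(H) exists and LAvg(H) = LAvg(H₁). -/
/-!
The thickenings of `H₂` have measure tending to `λ(H₂) = 0`, and they stay in a fixed bounded
set, so they contribute `o(1)` both to the integral of `x` and to the measure of the thickenings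
of `H₁ ∪ H₂`. Since the measure of the thickenings of `H₁` tends to `λ(cl H₁) > 0`, the averages
of `H₁ ∪ H₂` and of `H₁` have the same limit.
-/

open Filter Topology MeasureTheory

open Metric Bornology

lemma integrableOn_id_of_isBounded {s : Set ℝ} (hs : IsBounded s) :
    IntegrableOn (fun x : ℝ => x) s := by
  obtain ⟨r, hr⟩ := hs.subset_closedBall 0
  exact (continuousOn_id.integrableOn_compact (isCompact_closedBall 0 r)).mono_set hr

lemma setAvg_union_eq {s t : Set ℝ} (hs : IsBounded s) (ht : IsBounded t)
    (hsm : MeasurableSet s) (htm : MeasurableSet t) :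
    setAvg (s ∪ t) = ((∫ x in s, x) + ∫ x in t \ s, x) /
      ((volume s).toReal + (volume (t \ s)).toReal) := by
  have hdisj : Disjoint s (t \ s) := disjoint_sdiff_self_right
  have hdm : MeasurableSet (t \ s) := htm.diff hsm
  rw [setAvg, ← Set.union_sdiff_self,
    setIntegral_union hdisj hdm (integrableOn_id_of_isBounded hs)
      (integrableOn_id_of_isBounded (ht.subset Set.sdiff_subset)),
    measure_union hdisj hdm,
    ENNReal.toReal_add hs.measure_lt_top.ne (ht.subset Set.sdiff_subset).measure_lt_top.ne]

lemma tendsto_setIntegral_id_zero {ι : Type*} {l : Filter ι} {s : ι → Set ℝ} {K : Set ℝ}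
    (hK : IsBounded K) (hsK : ∀ᶠ i in l, s i ⊆ K)
    (hs : Tendsto (fun i => (volume (s i)).toReal) l (𝓝 0)) :
    Tendsto (fun i => ∫ x in s i, x) l (𝓝 0) := by
  obtain ⟨M, hM⟩ := hK.subset_closedBall 0
  refine squeeze_zero_norm' ?_ (by simpa using hs.const_mul M)
  filter_upwards [hsK] with i hi
  exact norm_setIntegral_le_of_norm_le_const ((hK.subset hi).measure_lt_top)
    fun x hx => mem_closedBall_zero_iff.mp (hM (hi hx))

lemma tendsto_setAvg_union {ι : Type*} {l : Filter ι} {s t : ι → Set ℝ} {K : Set ℝ}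
    {c L : ℝ} (hK : IsBounded K) (hsK : ∀ᶠ i in l, s i ⊆ K) (htK : ∀ᶠ i in l, t i ⊆ K)
    (hsm : ∀ i, MeasurableSet (s i)) (htm : ∀ i, MeasurableSet (t i)) (hc : c ≠ 0)
    (hs : Tendsto (fun i => (volume (s i)).toReal) l (𝓝 c))
    (ht : Tendsto (fun i => (volume (t i)).toReal) l (𝓝 0))
    (hL : Tendsto (fun i => setAvg (s i)) l (𝓝 L)) :
    Tendsto (fun i => setAvg (s i ∪ t i)) l (𝓝 L) := by
  have hdiff : Tendsto (fun i => (volume (t i \ s i)).toReal) l (𝓝 0) := by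
    refine squeeze_zero' (Eventually.of_forall fun _ => ENNReal.toReal_nonneg) ?_ ht
    filter_upwards [htK] with i hi
    exact ENNReal.toReal_mono (hK.subset hi).measure_lt_top.ne (measure_mono Set.sdiff_subset)
  have hint : Tendsto (fun i => ∫ x in s i, x) l (𝓝 (L * c)) := by
    refine (hL.mul hs).congr' ?_
    filter_upwards [hs.eventually_ne hc] with i hi
    exact div_mul_cancel₀ _ hi
  have hint_diff : Tendsto (fun i => ∫ x in t i \ s i, x) l (𝓝 0) :=
    tendsto_setIntegral_id_zero hK (htK.mono fun _ hi => Set.sdiff_subset.trans hi) hdiff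
  have hlim := (hint.add hint_diff).div (hs.add hdiff) (by simpa using hc)
  rw [add_zero, add_zero, mul_div_cancel_right₀ _ hc] at hlim
  refine hlim.congr' ?_
  filter_upwards [hsK, htK] with i his hit
  exact (setAvg_union_eq (hK.subset his) (hK.subset hit) (hsm i) (htm i)).symm

lemma tendsto_measure_thickening_toReal {X : Type*} [PseudoMetricSpace X] [ProperSpace X]
    [MeasurableSpace X] [OpensMeasurableSpace X] {μ : Measure X} [IsFiniteMeasureOnCompacts μ]
    {s : Set X} (hs : IsBounded s) :
    Tendsto (fun δ => (μ (thickening δ s)).toReal) (𝓝[>] 0) (𝓝 (μ (closure s)).toReal) :=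
  (ENNReal.tendsto_toReal hs.closure.measure_lt_top.ne).comp
    (tendsto_measure_thickening ⟨1, one_pos, hs.thickening.measure_lt_top.ne⟩)

theorem lavg_union_compact_null_general (H₁ H₂ : Set ℝ)
    (hbd : Bornology.IsBounded H₁)
    (hcl : 0 < volume (closure H₁)) (hcpt : IsCompact H₂) (h0 : volume H₂ = 0)
    (L : ℝ)
    (hL : Tendsto (fun δ : ℝ => setAvg (Metric.thickening δ H₁)) (𝓝[>] 0) (𝓝 L)) :
    Tendsto (fun δ : ℝ => setAvg (Metric.thickening δ (H₁ ∪ H₂))) (𝓝[>] 0) (𝓝 L) := by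
  have hsmall : ∀ᶠ δ in 𝓝[>] (0 : ℝ), ∀ H : Set ℝ, thickening δ H ⊆ thickening 1 H := by
    filter_upwards [Ioo_mem_nhdsGT one_pos] with δ hδ H
    exact thickening_mono hδ.2.le H
  have hc : (volume (closure H₁)).toReal ≠ 0 :=
    (ENNReal.toReal_pos hcl.ne' hbd.closure.measure_lt_top.ne).ne'
  have hvol₂ := tendsto_measure_thickening_toReal (μ := volume) hcpt.isBounded
  rw [hcpt.isClosed.closure_eq, h0, ENNReal.toReal_zero] at hvol₂
  simp_rw [thickening_union]
  exact tendsto_setAvg_union (hbd.union hcpt.isBounded).thickening (K := thickening 1 (H₁ ∪ H₂))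
    (hsmall.mono fun δ h => (h H₁).trans (thickening_subset_of_subset 1 Set.subset_union_left))
    (hsmall.mono fun δ h => (h H₂).trans (thickening_subset_of_subset 1 Set.subset_union_right))
    (fun _ => isOpen_thickening.measurableSet) (fun _ => isOpen_thickening.measurableSet) hc
    (tendsto_measure_thickening_toReal hbd) hvol₂ hL

/-- removing a compact null set `H₂` (disjoint from `H₁`, whose
closure has positive measure) does not change `LAvg`. -/
theorem lavg_union_compact_null (H₁ H₂ : Set ℝ) (hdisj : Disjoint H₁ H₂)
    (hbd : Bornology.IsBounded H₁) (hne : H₁.Nonempty)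
    (hcl : 0 < volume (closure H₁)) (hcpt : IsCompact H₂) (h0 : volume H₂ = 0)
    (L : ℝ)
    (hL : Tendsto (fun δ : ℝ => setAvg (Metric.thickening δ H₁)) (𝓝[>] 0) (𝓝 L)) :
    Tendsto (fun δ : ℝ => setAvg (Metric.thickening δ (H₁ ∪ H₂))) (𝓝[>] 0) (𝓝 L) :=
  lavg_union_compact_null_general H₁ H₂ hbd hcl hcpt h0 L hL
end

section
/- Let H ⊆ [a, b] be a bounded infinite set and suppose M^eds(H) = k, i.e. for every ε > 0 there is N ∈ ℕ such that for all n > N and every choice of points ξ_i ∈ H_{n,i} for i ∈ I_n, one has |A({ξ_i : i ∈ I_n}) − k| < ε. Then liminf H ≤ k ≤ limsup H. -/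
/-!
If `c > limsup H`, only finitely many points of `H` exceed `c`. The pieces `H_{n,i}` are
pairwise disjoint, so every sample `ξ` uses each of these points at most once and
`∑ i ∈ I_n, (ξ i - c)` is bounded by a constant independent of `n`. Because `H` is infinite,
`|I_n| → ∞`, so the sample means are at most `c + o(1)` and `k ≤ c`. Symmetrically `c ≤ k`
for every `c < liminf H`.
-/

open Filter Topology
open scoped Classical

/-- `H_{n,i} = H ∩ [a + (i/n)(b−a), a + ((i+1)/n)(b−a))`. -/
def edsPiece (a b : ℝ) (H : Set ℝ) (n i : ℕ) : Set ℝ :=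
  H ∩ Set.Ico (a + (i : ℝ) / n * (b - a)) (a + ((i : ℝ) + 1) / n * (b - a))

/-- `I_n`: the indices `0 ≤ i ≤ n−1` with `H_{n,i} ≠ ∅`. -/
noncomputable def edsIdx (a b : ℝ) (H : Set ℝ) (n : ℕ) : Finset ℕ :=
  (Finset.range n).filter (fun i => (edsPiece a b H n i).Nonempty)

/-- `M^eds(H) = k`: for every `ε > 0` there is `N` such that for all `n > N` and
every choice of sample points `ξ i ∈ H_{n,i}` (`i ∈ I_n`), the arithmetic mean of
the chosen points is within `ε` of `k`. -/
def MedsIs (a b : ℝ) (H : Set ℝ) (k : ℝ) : Prop :=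
  ∀ ε > (0 : ℝ), ∃ N : ℕ, ∀ n > N, ∀ ξ : ℕ → ℝ,
    (∀ i ∈ edsIdx a b H n, ξ i ∈ edsPiece a b H n i) →
    |(∑ i ∈ edsIdx a b H n, ξ i) / ((edsIdx a b H n).card : ℝ) - k| < ε

open Set Finset

theorem sum_comp_le_sum_of_injOn {ι α M : Type*} [AddCommMonoid M] [Preorder M]
    [AddLeftMono M] {s : Finset ι} {t : Finset α} {f : ι → α} {g : α → M}
    (hf : InjOn f s) (hs : ∀ i ∈ s, f i ∉ t → g (f i) ≤ 0) (ht : ∀ x ∈ t, 0 ≤ g x) :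
    ∑ i ∈ s, g (f i) ≤ ∑ x ∈ t, g x := by
  rw [← Finset.sum_image hf]
  calc ∑ x ∈ s.image f, g x ≤ ∑ x ∈ s.image f ∩ t, g x :=
        Finset.sum_le_sum_of_subset_of_nonpos' Finset.inter_subset_left fun x hx hxt => by
          obtain ⟨i, hi, rfl⟩ := Finset.mem_image.1 hx
          exact hs i hi fun h => hxt (Finset.mem_inter.2 ⟨hx, h⟩)
    _ ≤ ∑ x ∈ t, g x :=
        Finset.sum_le_sum_of_subset_of_nonneg Finset.inter_subset_right fun x hx _ => ht x hx

section Partition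

variable {a b : ℝ} {H : Set ℝ} {n i j : ℕ} {x y : ℝ}

theorem lt_of_mem_edsPiece_of_lt (hab : a < b) (hij : i < j) (hx : x ∈ edsPiece a b H n i)
    (hy : y ∈ edsPiece a b H n j) : x < y := by
  obtain ⟨-, -, hxu⟩ := hx
  obtain ⟨-, hyl, -⟩ := hy
  have hij' : (i : ℝ) + 1 ≤ j := by exact_mod_cast hij
  have : ((i : ℝ) + 1) / n ≤ j / n := div_le_div_of_nonneg_right hij' n.cast_nonneg
  nlinarith

theorem eq_of_mem_edsPiece (hab : a < b) (hi : x ∈ edsPiece a b H n i)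
    (hj : x ∈ edsPiece a b H n j) : i = j := by
  rcases lt_trichotomy i j with h | h | h
  · exact absurd (lt_of_mem_edsPiece_of_lt hab h hi hj) (lt_irrefl x)
  · exact h
  · exact absurd (lt_of_mem_edsPiece_of_lt hab h hj hi) (lt_irrefl x)

theorem abs_sub_lt_of_mem_edsPiece (hx : x ∈ edsPiece a b H n i)
    (hy : y ∈ edsPiece a b H n i) : |x - y| < (b - a) / n := by
  obtain ⟨-, hx₁, hx₂⟩ := hx
  obtain ⟨-, hy₁, hy₂⟩ := hy
  have hwidth : ((i : ℝ) + 1) / n * (b - a) - i / n * (b - a) = (b - a) / n := by ring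
  rw [abs_sub_lt_iff]
  constructor <;> linarith

theorem mem_edsPiece_floor (hab : a < b) (hn : 0 < n) (hxH : x ∈ H) (hxa : a ≤ x)
    (hxb : x < b) :
    ⌊(x - a) / (b - a) * n⌋₊ < n ∧ x ∈ edsPiece a b H n ⌊(x - a) / (b - a) * n⌋₊ := by
  have hba : 0 < b - a := sub_pos.2 hab
  have hn' : (0 : ℝ) < n := by exact_mod_cast hn
  set t := (x - a) / (b - a)
  have ht₀ : 0 ≤ t := div_nonneg (sub_nonneg.2 hxa) hba.le
  have ht₁ : t < 1 := (div_lt_one hba).2 (by linarith)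
  have htx : t * (b - a) = x - a := div_mul_cancel₀ _ hba.ne'
  have htn : 0 ≤ t * n := mul_nonneg ht₀ hn'.le
  have hlo : (⌊t * n⌋₊ : ℝ) / n ≤ t := (div_le_iff₀ hn').2 (Nat.floor_le htn)
  have hhi : t < ((⌊t * n⌋₊ : ℝ) + 1) / n := (lt_div_iff₀ hn').2 (Nat.lt_floor_add_one _)
  refine ⟨(Nat.floor_lt htn).2 (by nlinarith), hxH, ?_, ?_⟩
  · nlinarith [mul_le_mul_of_nonneg_right hlo hba.le]
  · nlinarith [mul_lt_mul_of_pos_right hhi hba]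

theorem tendsto_card_edsIdx (hab : a < b) (hH : H ⊆ Icc a b) (hi : H.Infinite) :
    Tendsto (fun n => #(edsIdx a b H n)) atTop atTop := by
  refine tendsto_atTop.2 fun C => ?_
  obtain ⟨T, hTH, rfl⟩ := (hi.sdiff (finite_singleton b)).exists_subset_card_eq C
  have hT : ∀ x ∈ T, x ∈ H ∧ a ≤ x ∧ x < b := fun x hx => by
    obtain ⟨hxH, hxb⟩ := hTH hx
    exact ⟨hxH, (hH hxH).1, (hH hxH).2.lt_of_ne hxb⟩
  set idx : ℕ → ℝ → ℕ := fun n x => ⌊(x - a) / (b - a) * n⌋₊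
  have hsep : ∀ᶠ n in atTop, ∀ x ∈ T, ∀ y ∈ T, idx n x = idx n y → x = y := by
    simp only [eventually_all_finset]
    intro x hx y hy
    by_cases hxy : x = y
    · exact Eventually.of_forall fun _ _ => hxy
    have hfine : ∀ᶠ n : ℕ in atTop, (b - a) / n < |x - y| :=
      (tendsto_const_div_atTop_nhds_zero_nat (b - a)).eventually
        (gt_mem_nhds (abs_pos.2 (sub_ne_zero.2 hxy)))
    filter_upwards [hfine, eventually_gt_atTop 0] with n hfine hn hidx
    obtain ⟨hxH, hxa, hxb⟩ := hT x hx
    obtain ⟨hyH, hya, hyb⟩ := hT y hy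
    have hxi : x ∈ edsPiece a b H n (idx n y) := hidx ▸ (mem_edsPiece_floor hab hn hxH hxa hxb).2
    exact absurd (abs_sub_lt_of_mem_edsPiece hxi (mem_edsPiece_floor hab hn hyH hya hyb).2)
      hfine.not_gt
  filter_upwards [hsep, eventually_gt_atTop 0] with n hsep hn
  refine Finset.card_le_card_of_injOn (idx n) (fun x hx => ?_) fun x hx y hy => hsep x hx y hy
  obtain ⟨hxH, hxa, hxb⟩ := hT x hx
  obtain ⟨hlt, hmem⟩ := mem_edsPiece_floor hab hn hxH hxa hxb
  exact Finset.mem_filter.2 ⟨Finset.mem_range.2 hlt, x, hmem⟩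

end Partition

noncomputable def edsMean (a b : ℝ) (H : Set ℝ) (n : ℕ) (ξ : ℕ → ℝ) : ℝ :=
  (∑ i ∈ edsIdx a b H n, ξ i) / #(edsIdx a b H n)

section Meds

variable {a b : ℝ} {H : Set ℝ} {k c : ℝ}

theorem MedsIs.exists_tendsto_edsMean (hk : MedsIs a b H k) :
    ∃ ξ : ℕ → ℕ → ℝ, (∀ n, ∀ i ∈ edsIdx a b H n, ξ n i ∈ edsPiece a b H n i) ∧
      Tendsto (fun n => edsMean a b H n (ξ n)) atTop (𝓝 k) := by
  have hpick : ∀ n i, ∃ x, i ∈ edsIdx a b H n → x ∈ edsPiece a b H n i := fun n i =>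
    if h : (edsPiece a b H n i).Nonempty then ⟨h.some, fun _ => h.some_mem⟩
    else ⟨0, fun hi => absurd (Finset.mem_filter.1 hi).2 h⟩
  choose ξ hξ using hpick
  refine ⟨ξ, hξ, Metric.tendsto_atTop.2 fun ε hε => ?_⟩
  obtain ⟨N, hN⟩ := hk ε hε
  exact ⟨N + 1, fun n hn => hN n hn (ξ n) (hξ n)⟩

theorem sum_sub_le_of_finite_inter_Ioi (hab : a < b) (hfin : (H ∩ Ioi c).Finite) {n : ℕ}
    {ξ : ℕ → ℝ} (hξ : ∀ i ∈ edsIdx a b H n, ξ i ∈ edsPiece a b H n i) :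
    ∑ i ∈ edsIdx a b H n, (ξ i - c) ≤ ∑ x ∈ hfin.toFinset, (x - c) :=
  sum_comp_le_sum_of_injOn (g := (· - c))
    (fun i hi j hj hij => eq_of_mem_edsPiece hab (hξ i hi) (hij ▸ hξ j hj))
    (fun i hi hξi => sub_nonpos.2 (not_lt.1 fun hlt =>
      hξi ((Set.Finite.mem_toFinset _).2 ⟨(hξ i hi).1, hlt⟩)))
    (fun _ hx => sub_nonneg.2 ((Set.Finite.mem_toFinset _).1 hx).2.le)

theorem sum_sub_le_of_finite_inter_Iio (hab : a < b) (hfin : (H ∩ Iio c).Finite) {n : ℕ}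
    {ξ : ℕ → ℝ} (hξ : ∀ i ∈ edsIdx a b H n, ξ i ∈ edsPiece a b H n i) :
    ∑ i ∈ edsIdx a b H n, (c - ξ i) ≤ ∑ x ∈ hfin.toFinset, (c - x) :=
  sum_comp_le_sum_of_injOn (g := (c - ·))
    (fun i hi j hj hij => eq_of_mem_edsPiece hab (hξ i hi) (hij ▸ hξ j hj))
    (fun i hi hξi => sub_nonpos.2 (not_lt.1 fun hlt =>
      hξi ((Set.Finite.mem_toFinset _).2 ⟨(hξ i hi).1, hlt⟩)))
    (fun _ hx => sub_nonneg.2 ((Set.Finite.mem_toFinset _).1 hx).2.le)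

theorem MedsIs.le_of_finite_inter_Ioi (hab : a < b) (hH : H ⊆ Icc a b) (hi : H.Infinite)
    (hk : MedsIs a b H k) (hfin : (H ∩ Ioi c).Finite) : k ≤ c := by
  obtain ⟨ξ, hξ, hlim⟩ := hk.exists_tendsto_edsMean
  set E := ∑ x ∈ hfin.toFinset, (x - c)
  have hcard := tendsto_card_edsIdx hab hH hi
  have hbound : ∀ᶠ n in atTop, edsMean a b H n (ξ n) ≤ c + E / #(edsIdx a b H n) := by
    filter_upwards [hcard.eventually_gt_atTop 0] with n hn
    have hpos : (0 : ℝ) < #(edsIdx a b H n) := by exact_mod_cast hn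
    have hsum := sum_sub_le_of_finite_inter_Ioi hab hfin (hξ n)
    rw [Finset.sum_sub_distrib, Finset.sum_const, nsmul_eq_mul] at hsum
    rw [edsMean, div_le_iff₀ hpos, add_mul, div_mul_cancel₀ _ hpos.ne']
    linarith
  have hE : Tendsto (fun n => c + E / #(edsIdx a b H n)) atTop (𝓝 c) := by
    simpa using tendsto_const_nhds.add ((tendsto_natCast_atTop_atTop.comp hcard).const_div_atTop E)
  exact le_of_tendsto_of_tendsto hlim hE hbound

theorem MedsIs.ge_of_finite_inter_Iio (hab : a < b) (hH : H ⊆ Icc a b) (hi : H.Infinite)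
    (hk : MedsIs a b H k) (hfin : (H ∩ Iio c).Finite) : c ≤ k := by
  obtain ⟨ξ, hξ, hlim⟩ := hk.exists_tendsto_edsMean
  set E := ∑ x ∈ hfin.toFinset, (c - x)
  have hcard := tendsto_card_edsIdx hab hH hi
  have hbound : ∀ᶠ n in atTop, c - E / #(edsIdx a b H n) ≤ edsMean a b H n (ξ n) := by
    filter_upwards [hcard.eventually_gt_atTop 0] with n hn
    have hpos : (0 : ℝ) < #(edsIdx a b H n) := by exact_mod_cast hn
    have hsum := sum_sub_le_of_finite_inter_Iio hab hfin (hξ n)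
    rw [Finset.sum_sub_distrib, Finset.sum_const, nsmul_eq_mul] at hsum
    rw [edsMean, le_div_iff₀ hpos, sub_mul, div_mul_cancel₀ _ hpos.ne']
    linarith
  have hE : Tendsto (fun n => c - E / #(edsIdx a b H n)) atTop (𝓝 c) := by
    simpa using tendsto_const_nhds.sub ((tendsto_natCast_atTop_atTop.comp hcard).const_div_atTop E)
  exact le_of_tendsto_of_tendsto hE hlim hbound

end Meds

section AccPts

variable {a b c : ℝ} {H : Set ℝ}

theorem accPts_subset_Icc (hH : H ⊆ Icc a b) : accPts H ⊆ Icc a b :=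
  fun _ hx => closure_minimal hH isClosed_Icc (mem_closure_iff_clusterPt.2 hx.clusterPt)

theorem finite_inter_Ioi_of_sSup_accPts_lt (hH : H ⊆ Icc a b) (hc : sSup (accPts H) < c) :
    (H ∩ Ioi c).Finite := by
  by_contra hinf
  obtain ⟨x, -, hx⟩ := Set.Infinite.exists_accPt_of_subset_isCompact hinf
    isCompact_Icc fun y hy => hH hy.1
  have hxH : x ∈ accPts H := hx.mono (principal_mono.2 inter_subset_left)
  have hcx : c ≤ x := closure_minimal (fun y hy => le_of_lt hy.2) isClosed_Ici
    (mem_closure_iff_clusterPt.2 hx.clusterPt)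
  exact hc.not_ge (hcx.trans (le_csSup (bddAbove_Icc.mono (accPts_subset_Icc hH)) hxH))

theorem finite_inter_Iio_of_lt_sInf_accPts (hH : H ⊆ Icc a b) (hc : c < sInf (accPts H)) :
    (H ∩ Iio c).Finite := by
  by_contra hinf
  obtain ⟨x, -, hx⟩ := Set.Infinite.exists_accPt_of_subset_isCompact hinf
    isCompact_Icc fun y hy => hH hy.1
  have hxH : x ∈ accPts H := hx.mono (principal_mono.2 inter_subset_left)
  have hxc : x ≤ c := closure_minimal (fun y hy => le_of_lt hy.2) isClosed_Iic
    (mem_closure_iff_clusterPt.2 hx.clusterPt)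
  exact hc.not_ge ((csInf_le (bddBelow_Icc.mono (accPts_subset_Icc hH)) hxH).trans hxc)

end AccPts

/-- `M^eds` is strongly internal:
`liminf H ≤ M^eds(H) ≤ limsup H`. -/
theorem meds_strongly_internal (a b : ℝ) (H : Set ℝ) (hH : H ⊆ Set.Icc a b)
    (hi : H.Infinite) (k : ℝ) (hk : MedsIs a b H k) :
    sInf (accPts H) ≤ k ∧ k ≤ sSup (accPts H) := by
  have hab : a < b := by
    by_contra! hba
    exact hi ((finite_singleton a).subset fun x hx => le_antisymm ((hH hx).2.trans hba) (hH hx).1)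
  exact ⟨le_of_forall_lt_imp_le_of_dense fun c hc =>
      hk.ge_of_finite_inter_Iio hab hH hi (finite_inter_Iio_of_lt_sInf_accPts hH hc),
    le_of_forall_gt_imp_ge_of_dense fun c hc =>
      hk.le_of_finite_inter_Ioi hab hH hi (finite_inter_Ioi_of_sSup_accPts_lt hH hc)⟩
end

section
/- Let H = H₁ ∪ H₂ ⊆ [a, b] where H₁, H₂ are disjoint, λ(cl(H₁)) > 0, and H₂ is compact with λ(H₂) = 0. If M^eds(H₁) = k then M^eds(H) = k. -/
open Filter Topology MeasureTheory
open scoped Classical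

/-!
Cut `[a, b]` into `n` cells. A sample of `H₁ ∪ H₂` can be turned into a sample of `H₁` by
dropping the cells that meet `H₂` but not `H₁` and re-choosing the points that lie in `H₂`;
both operations only touch cells meeting `H₂`. Since `H₂` is compact and null, for fine grids
these cells lie in an open set of small measure around `H₂`, so there are `o(n)` of them. On the
other hand the closed cells meeting `H₁` cover `cl H₁`, so at least `λ(cl H₁) n / (b - a)` cells
meet `H₁`. Altering a vanishing proportion of uniformly bounded terms moves the mean by a
vanishing amount.
-/

open Finset

section Averages

variable {ι : Type*} {s t : Finset ι} {f g : ι → ℝ} {C : ℝ}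

lemma abs_sum_le_card_mul (h : ∀ i ∈ s, |f i| ≤ C) : |∑ i ∈ s, f i| ≤ #s * C :=
  (abs_sum_le_sum_abs f s).trans <| (sum_le_card_nsmul s _ C h).trans_eq (nsmul_eq_mul _ _)

lemma abs_sum_div_card_sub_sum_div_card_le (hf : ∀ i ∈ s, |f i| ≤ C)
    (hg : ∀ i ∈ s, |g i| ≤ C) :
    |(∑ i ∈ s, f i) / #s - (∑ i ∈ s, g i) / #s| ≤ 2 * C * #{i ∈ s | f i ≠ g i} / #s := by
  rw [← sub_div, ← sum_sub_distrib, abs_div, Nat.abs_cast]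
  gcongr
  rw [← sum_filter_ne_zero]
  simp_rw [sub_ne_zero]
  refine (abs_sum_le_card_mul fun i hi => ?_).trans_eq (mul_comm _ _)
  have hi := (mem_filter.1 hi).1
  linarith [abs_sub (f i) (g i), hf i hi, hg i hi]

variable [DecidableEq ι]

lemma abs_sum_div_card_sub_sum_div_card_le_of_subset (hst : s ⊆ t) (hs : s.Nonempty)
    (hf : ∀ i ∈ t, |f i| ≤ C) :
    |(∑ i ∈ t, f i) / #t - (∑ i ∈ s, f i) / #s| ≤ 2 * C * #(t \ s) / #t := by
  have hS := abs_sum_le_card_mul fun i hi => hf i (hst hi)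
  have hE := abs_sum_le_card_mul (s := t \ s) fun i hi => hf i (sdiff_subset hi)
  have hcard : (#t : ℝ) = #(t \ s) + #s := by
    exact_mod_cast (card_sdiff_add_card_eq_card hst).symm
  rw [← sum_sdiff hst, hcard]
  set S := ∑ i ∈ s, f i
  set E := ∑ i ∈ t \ s, f i
  set m : ℝ := (#s : ℝ)
  set e : ℝ := (#(t \ s) : ℝ)
  have hm : 0 < m := Nat.cast_pos.2 hs.card_pos
  have he : 0 ≤ e := Nat.cast_nonneg _
  have hdiff : (E + S) / (e + m) - S / m = (m * E - e * S) / (m * (e + m)) := by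
    field_simp
    ring
  have hnum : |m * E - e * S| ≤ 2 * C * e * m := by
    calc |m * E - e * S| ≤ m * |E| + e * |S| := by
          simpa only [abs_mul, abs_of_pos hm, abs_of_nonneg he] using abs_sub (m * E) (e * S)
      _ ≤ m * (e * C) + e * (m * C) := by gcongr
      _ = 2 * C * e * m := by ring
  have hden : 0 < m * (e + m) := by positivity
  rw [hdiff, abs_div, abs_of_pos hden, div_le_div_iff₀ hden (by positivity)]
  calc |m * E - e * S| * (e + m) ≤ 2 * C * e * m * (e + m) := by gcongr
    _ = 2 * C * e * (m * (e + m)) := by ring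

lemma abs_sum_div_card_sub_sum_div_card_le_of_subset_of_eqOn {B : Finset ι} (hst : s ⊆ t)
    (hs : s.Nonempty) (hf : ∀ i ∈ t, |f i| ≤ C) (hg : ∀ i ∈ s, |g i| ≤ C) (htB : t \ s ⊆ B)
    (hfgB : ∀ i ∈ s, f i ≠ g i → i ∈ B) :
    |(∑ i ∈ t, f i) / #t - (∑ i ∈ s, g i) / #s| ≤ 4 * C * #B / #s := by
  have hC : 0 ≤ C := (abs_nonneg _).trans (hg _ hs.choose_spec)
  have hsB : (#{i ∈ s | f i ≠ g i} : ℝ) ≤ #B := by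
    exact_mod_cast card_le_card fun i hi => hfgB i (mem_filter.1 hi).1 (mem_filter.1 hi).2
  have htsB : (#(t \ s) : ℝ) / #t ≤ #B / #s :=
    div_le_div₀ (Nat.cast_nonneg _) (by exact_mod_cast card_le_card htB)
      (by exact_mod_cast hs.card_pos) (by exact_mod_cast card_le_card hst)
  calc |(∑ i ∈ t, f i) / #t - (∑ i ∈ s, g i) / #s|
      ≤ |(∑ i ∈ t, f i) / #t - (∑ i ∈ s, f i) / #s|
        + |(∑ i ∈ s, f i) / #s - (∑ i ∈ s, g i) / #s| := abs_sub_le _ _ _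
    _ ≤ 2 * C * #(t \ s) / #t + 2 * C * #{i ∈ s | f i ≠ g i} / #s :=
        add_le_add (abs_sum_div_card_sub_sum_div_card_le_of_subset hst hs hf)
          (abs_sum_div_card_sub_sum_div_card_le (fun i hi => hf i (hst hi)) hg)
    _ ≤ 2 * C * (#B / #s) + 2 * C * (#B / #s) := by
        rw [mul_div_assoc, mul_div_assoc]
        gcongr
    _ = 4 * C * #B / #s := by ring

end Averages

/-- The `i`-th grid cell, so that `edsPiece a b H n i = H ∩ edsCell a b n i` definitionally. -/
def edsCell (a b : ℝ) (n i : ℕ) : Set ℝ :=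
  Set.Ico (a + (i : ℝ) / n * (b - a)) (a + ((i : ℝ) + 1) / n * (b - a))

lemma mem_edsIdx {a b : ℝ} {H : Set ℝ} {n i : ℕ} :
    i ∈ edsIdx a b H n ↔ i < n ∧ (H ∩ edsCell a b n i).Nonempty := by
  rw [edsIdx, mem_filter, mem_range]
  rfl

lemma edsIdx_union (a b : ℝ) (H₁ H₂ : Set ℝ) (n : ℕ) :
    edsIdx a b (H₁ ∪ H₂) n = edsIdx a b H₁ n ∪ edsIdx a b H₂ n := by
  ext i
  simp only [mem_union, mem_edsIdx, Set.union_inter_distrib_right, Set.union_nonempty]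
  tauto

lemma volume_edsCell (a b : ℝ) (n i : ℕ) :
    volume (edsCell a b n i) = ENNReal.ofReal ((b - a) / n) := by
  rw [edsCell, Real.volume_Ico]
  ring_nf

lemma volume_closure_edsCell_le (a b : ℝ) (n i : ℕ) :
    volume (closure (edsCell a b n i)) ≤ ENNReal.ofReal ((b - a) / n) := by
  calc volume (closure (edsCell a b n i))
      ≤ volume (Set.Icc (a + (i : ℝ) / n * (b - a)) (a + ((i : ℝ) + 1) / n * (b - a))) :=
        measure_mono (closure_minimal Set.Ico_subset_Icc_self isClosed_Icc)
    _ = ENNReal.ofReal ((b - a) / n) := by rw [Real.volume_Icc]; ring_nf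

open Function in
lemma pairwise_disjoint_edsCell {a b : ℝ} (hab : a ≤ b) (n : ℕ) :
    Pairwise (Disjoint on edsCell a b n) := by
  intro i j hij
  wlog hlt : i < j generalizing i j
  · exact (this hij.symm ((Ne.symm hij).lt_of_le (not_lt.1 hlt))).symm
  rw [Function.onFun, edsCell, edsCell, Set.Ico_disjoint_Ico]
  have : (i : ℝ) + 1 ≤ j := by exact_mod_cast hlt
  refine (min_le_left _ _).trans (le_trans ?_ (le_max_right _ _))
  gcongr

lemma dist_le_of_mem_edsCell {a b x y : ℝ} {n i : ℕ} (hx : x ∈ edsCell a b n i)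
    (hy : y ∈ edsCell a b n i) : dist x y ≤ (b - a) / n := by
  convert Real.dist_le_of_mem_Icc (Set.Ico_subset_Icc_self hx) (Set.Ico_subset_Icc_self hy)
    using 1
  ring

lemma exists_mem_edsCell {a b x : ℝ} {n : ℕ} (hn : 0 < n) (hx : x ∈ Set.Ico a b) :
    ∃ i < n, x ∈ edsCell a b n i := by
  have hL : 0 < b - a := by linarith [hx.1, hx.2]
  have hn' : (0 : ℝ) < n := by exact_mod_cast hn
  have ht : 0 ≤ (x - a) * n / (b - a) := by have := hx.1; positivity
  refine ⟨⌊(x - a) * n / (b - a)⌋₊, (Nat.floor_lt ht).2 ?_, ?_, ?_⟩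
  · rw [div_lt_iff₀ hL]; nlinarith [hx.2]
  · have := Nat.floor_le ht
    rw [le_div_iff₀ hL] at this
    rw [div_mul_eq_mul_div, ← le_sub_iff_add_le', div_le_iff₀ hn']
    linarith
  · have := Nat.lt_floor_add_one ((x - a) * n / (b - a))
    rw [div_lt_iff₀ hL] at this
    rw [div_mul_eq_mul_div, ← sub_lt_iff_lt_add', lt_div_iff₀ hn']
    linarith

lemma subset_insert_biUnion_edsCell {a b : ℝ} {H : Set ℝ} (hH : H ⊆ Set.Icc a b) {n : ℕ}
    (hn : 0 < n) : H ⊆ insert b (⋃ i ∈ edsIdx a b H n, edsCell a b n i) := by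
  intro x hxH
  rcases (hH hxH).2.eq_or_lt with rfl | hxb
  · exact Set.mem_insert _ _
  obtain ⟨i, hi, hxi⟩ := exists_mem_edsCell hn ⟨(hH hxH).1, hxb⟩
  exact Or.inr (Set.mem_biUnion (mem_edsIdx.2 ⟨hi, x, hxH, hxi⟩) hxi)

lemma volume_closure_le_card_edsIdx_mul {a b : ℝ} {H : Set ℝ} (hH : H ⊆ Set.Icc a b) {n : ℕ}
    (hn : 0 < n) :
    volume (closure H) ≤ #(edsIdx a b H n) * ENNReal.ofReal ((b - a) / n) := by
  calc volume (closure H)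
      ≤ volume (insert b (⋃ i ∈ edsIdx a b H n, closure (edsCell a b n i))) := by
        refine measure_mono (closure_minimal ?_ ?_)
        · refine (subset_insert_biUnion_edsCell hH hn).trans (Set.insert_subset_insert ?_)
          exact Set.biUnion_mono subset_rfl fun _ _ => subset_closure
        · rw [Set.insert_eq]
          exact isClosed_singleton.union (isClosed_biUnion_finset fun _ _ => isClosed_closure)
    _ ≤ ∑ i ∈ edsIdx a b H n, volume (closure (edsCell a b n i)) := by
        rw [measure_congr (insert_ae_eq_self b _)]
        exact measure_biUnion_finset_le _ _
    _ ≤ #(edsIdx a b H n) * ENNReal.ofReal ((b - a) / n) := by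
        simpa using sum_le_sum fun i _ => volume_closure_edsCell_le a b n i

lemma card_mul_le_volume_of_edsCell_subset {a b : ℝ} (hab : a ≤ b) {n : ℕ} {S : Finset ℕ}
    {U : Set ℝ} (hU : ∀ i ∈ S, edsCell a b n i ⊆ U) :
    #S * ENNReal.ofReal ((b - a) / n) ≤ volume U := by
  calc #S * ENNReal.ofReal ((b - a) / n) = ∑ i ∈ S, volume (edsCell a b n i) := by
        simp [volume_edsCell]
    _ = volume (⋃ i ∈ S, edsCell a b n i) :=
        (measure_biUnion_finset ((pairwise_disjoint_edsCell hab n).set_pairwise _)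
          fun _ _ => measurableSet_Ico).symm
    _ ≤ volume U := measure_mono (Set.iUnion₂_subset hU)

lemma eventually_card_edsIdx_le_of_isCompact {a b : ℝ} (hab : a < b) {K : Set ℝ}
    (hK : IsCompact K) (hK0 : volume K = 0) {δ : ℝ} (hδ : 0 < δ) :
    ∀ᶠ n : ℕ in atTop, (#(edsIdx a b K n) : ℝ) ≤ δ * n := by
  have hL : 0 < b - a := sub_pos.2 hab
  obtain ⟨U, hKU, hU, hUvol⟩ := Set.exists_isOpen_lt_of_lt K (ENNReal.ofReal (δ * (b - a)))
    (by rw [hK0]; positivity)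
  obtain ⟨r, hr, hrU⟩ := hK.exists_thickening_subset_open hU hKU
  filter_upwards [eventually_gt_atTop 0,
    (tendsto_const_div_atTop_nhds_zero_nat (b - a)).eventually (gt_mem_nhds hr)] with n hn hnr
  have hcells : ∀ i ∈ edsIdx a b K n, edsCell a b n i ⊆ U := by
    intro i hi y hy
    obtain ⟨x, hxK, hx⟩ := (mem_edsIdx.1 hi).2
    exact hrU (Metric.mem_thickening_iff.2 ⟨x, hxK, (dist_le_of_mem_edsCell hy hx).trans_lt hnr⟩)
  have hvol := (card_mul_le_volume_of_edsCell_subset hab.le hcells).trans_lt hUvol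
  rw [← ENNReal.ofReal_natCast, ← ENNReal.ofReal_mul (Nat.cast_nonneg _),
    ENNReal.ofReal_lt_ofReal_iff (by positivity), mul_div_assoc',
    div_lt_iff₀ (by positivity)] at hvol
  nlinarith

lemma eventually_card_edsIdx_le_mul_card {a b : ℝ} {H K : Set ℝ} (hH : H ⊆ Set.Icc a b)
    (hcl : 0 < volume (closure H)) (hK : IsCompact K) (hK0 : volume K = 0) {η : ℝ} (hη : 0 < η) :
    ∀ᶠ n : ℕ in atTop,
      0 < #(edsIdx a b H n) ∧ (#(edsIdx a b K n) : ℝ) ≤ η * #(edsIdx a b H n) := by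
  have hvol_le : volume (closure H) ≤ ENNReal.ofReal (b - a) :=
    (measure_mono (closure_minimal hH isClosed_Icc)).trans_eq Real.volume_Icc
  have hab : a < b := by
    by_contra! h
    rw [ENNReal.ofReal_of_nonpos (by linarith)] at hvol_le
    exact hcl.ne' (le_antisymm hvol_le zero_le)
  set c := (volume (closure H)).toReal / (b - a)
  have hc : 0 < c := div_pos (ENNReal.toReal_pos hcl.ne' (hvol_le.trans_lt (by simp)).ne)
    (sub_pos.2 hab)
  filter_upwards [eventually_gt_atTop 0,
    eventually_card_edsIdx_le_of_isCompact hab hK hK0 (mul_pos hη hc)] with n hn hKn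
  have hHn : c * n ≤ #(edsIdx a b H n) := by
    have := ENNReal.toReal_mono (by finiteness) (volume_closure_le_card_edsIdx_mul hH hn)
    rw [ENNReal.toReal_mul, ENNReal.toReal_natCast, ENNReal.toReal_ofReal (by positivity),
      mul_div_assoc', le_div_iff₀ (by positivity)] at this
    rw [div_mul_eq_mul_div, div_le_iff₀ (sub_pos.2 hab)]
    linarith
  refine ⟨by exact_mod_cast (mul_pos hc (by exact_mod_cast hn)).trans_le hHn, ?_⟩
  nlinarith

lemma exists_edsSample_of_union {a b : ℝ} {H₁ H₂ : Set ℝ} {n : ℕ} {ξ : ℕ → ℝ}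
    (hξ : ∀ i ∈ edsIdx a b (H₁ ∪ H₂) n, ξ i ∈ edsPiece a b (H₁ ∪ H₂) n i) :
    ∃ ξ' : ℕ → ℝ, (∀ i ∈ edsIdx a b H₁ n, ξ' i ∈ edsPiece a b H₁ n i) ∧
      ∀ i ∈ edsIdx a b H₁ n, ξ i ≠ ξ' i → i ∈ edsIdx a b H₂ n := by
  refine ⟨fun i => if ξ i ∈ H₁ then ξ i else Classical.epsilon (· ∈ edsPiece a b H₁ n i),
    fun i hi => ?_, fun i hi hne => ?_⟩
  · have hξi := hξ i (edsIdx_union a b H₁ H₂ n ▸ mem_union_left _ hi)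
    dsimp only
    split_ifs with h
    · exact ⟨h, hξi.2⟩
    · exact Classical.epsilon_spec (mem_edsIdx.1 hi).2
  · have hξi := hξ i (edsIdx_union a b H₁ H₂ n ▸ mem_union_left _ hi)
    have h : ξ i ∉ H₁ := fun h => hne (if_pos h).symm
    exact mem_edsIdx.2 ⟨(mem_edsIdx.1 hi).1, ξ i, hξi.1.resolve_left h, hξi.2⟩

theorem meds_union_compact_null_general (a b : ℝ) (H₁ H₂ : Set ℝ)
    (hsub : H₁ ∪ H₂ ⊆ Set.Icc a b)
    (hcl : 0 < volume (closure H₁)) (hcpt : IsCompact H₂) (h0 : volume H₂ = 0)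
    (k : ℝ) (hk : MedsIs a b H₁ k) :
    MedsIs a b (H₁ ∪ H₂) k := by
  set C := max |a| |b|
  have hbound : ∀ x ∈ Set.Icc a b, |x| ≤ C := fun x hx => abs_le_max_abs_abs hx.1 hx.2
  have hC : 0 ≤ C := (abs_nonneg a).trans (le_max_left _ _)
  intro ε hε
  obtain ⟨η, hη, hCη⟩ := exists_pos_mul_lt (half_pos hε) (4 * C)
  obtain ⟨N₁, hN₁⟩ := hk (ε / 2) (half_pos hε)
  obtain ⟨N₂, hN₂⟩ := eventually_atTop.1 <|
    eventually_card_edsIdx_le_mul_card (Set.subset_union_left.trans hsub) hcl hcpt h0 hη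
  refine ⟨max N₁ N₂, fun n hn ξ hξ => ?_⟩
  obtain ⟨hI₁, hT⟩ := hN₂ n (max_lt_iff.1 hn).2.le
  obtain ⟨ξ', hξ'₁, hξξ'⟩ := exists_edsSample_of_union hξ
  have hclose := abs_sum_div_card_sub_sum_div_card_le_of_subset_of_eqOn
    (edsIdx_union a b H₁ H₂ n ▸ subset_union_left) (card_pos.1 hI₁)
    (fun i hi => hbound _ (hsub (hξ i hi).1))
    (fun i hi => hbound _ (hsub (Or.inl (hξ'₁ i hi).1)))
    (sdiff_le_iff.2 (edsIdx_union a b H₁ H₂ n).le) hξξ'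
  have hsmall : 4 * C * #(edsIdx a b H₂ n) / #(edsIdx a b H₁ n) ≤ 4 * C * η := by
    rw [mul_div_assoc]
    gcongr
    exact (div_le_iff₀ (by exact_mod_cast hI₁)).2 hT
  calc _ ≤ _ := abs_sub_le _ ((∑ i ∈ edsIdx a b H₁ n, ξ' i) / #(edsIdx a b H₁ n)) k
    _ < 4 * C * η + ε / 2 :=
        add_lt_add_of_le_of_lt (hclose.trans hsmall) (hN₁ n (max_lt_iff.1 hn).1 ξ' hξ'₁)
    _ < ε := by linarith

/-- adjoining a disjoint compact null set `H₂` to `H₁` (whose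
closure has positive measure) does not change `M^eds`. -/
theorem meds_union_compact_null (a b : ℝ) (H₁ H₂ : Set ℝ)
    (hdisj : Disjoint H₁ H₂) (hsub : H₁ ∪ H₂ ⊆ Set.Icc a b)
    (hcl : 0 < volume (closure H₁)) (hcpt : IsCompact H₂) (h0 : volume H₂ = 0)
    (k : ℝ) (hk : MedsIs a b H₁ k) :
    MedsIs a b (H₁ ∪ H₂) k :=
  meds_union_compact_null_general a b H₁ H₂ hsub hcl hcpt h0 k hk
end
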